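/- arXiv:2404.07958 — 4 statements merged into one kernel-verified Lean document; each statement's English description precedes it below -/
import Mathlib

section
/- The number of parking functions of size n whose parking permutation avoids 132, 213, and 321 equals ∑_{k=1}^n k!·(n−k)!. -/
open Finset

noncomputable section

/-- The parking process over the first `k` cars (cars are `0,...,k-1`, i.e. cars `1,...,k`
in 1-indexed terms): returns `some occ` where `occ` maps each spot to the car parked there
(`none` meaning empty), or `none` if some car failed to park.  Car `c` drives to its
preferred spot `f c` and parks at the first free spot with index `≥ f c`, failing if
no such spot exists. -/
def parkAux {n : ℕ} (f : Fin n → Fin n) : ℕ → Option (Fin n → Option (Fin n))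
  | 0 => some fun _ => none
  | k + 1 =>
    (parkAux f k).bind fun occ =>
      if h : k < n then
        if hS : (Finset.univ.filter fun s => f ⟨k, h⟩ ≤ s ∧ occ s = none).Nonempty then
          some (Function.update occ
            ((Finset.univ.filter fun s => f ⟨k, h⟩ ≤ s ∧ occ s = none).min' hS)
            (some ⟨k, h⟩))
        else none
      else some occ

/-- All `n` cars park successfully. -/
def AllPark {n : ℕ} (f : Fin n → Fin n) : Prop := (parkAux f n).isSome

/-- `f` is a parking function: for every `i ∈ [n]`, at least `i` cars prefer
the first `i` spots.  (Here `i : Fin n` denotes the `(i+1)`-st spot, 0-indexed.) -/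
def IsParkingFunction {n : ℕ} (f : Fin n → Fin n) : Prop :=
  ∀ i : Fin n, i.val + 1 ≤ (Finset.univ.filter fun j => f j ≤ i).card

/-- `ρ` is the parking permutation of `f`: after all cars have parked,
spot `i` is occupied by car `ρ i`. -/
def IsParkingPerm {n : ℕ} (f : Fin n → Fin n) (ρ : Equiv.Perm (Fin n)) : Prop :=
  parkAux f n = some fun i => some (ρ i)

/-- `π` contains `σ` as a pattern. -/
def ContainsPattern {n m : ℕ} (π : Equiv.Perm (Fin n)) (σ : Equiv.Perm (Fin m)) : Prop :=
  ∃ g : Fin m → Fin n, StrictMono g ∧ ∀ a b : Fin m, σ a < σ b ↔ π (g a) < π (g b)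

/-- `ρ` avoids every pattern in the list `pats`. -/
def AvoidsAll {n : ℕ} (ρ : Equiv.Perm (Fin n)) (pats : List (Equiv.Perm (Fin 3))) : Prop :=
  ∀ σ ∈ pats, ¬ ContainsPattern ρ σ

/-- The number of parking functions of size `n` whose parking permutation avoids
all patterns in `pats`. -/
def pk (n : ℕ) (pats : List (Equiv.Perm (Fin 3))) : ℕ :=
  Nat.card {f : Fin n → Fin n // IsParkingFunction f ∧
    ∃ ρ : Equiv.Perm (Fin n), IsParkingPerm f ρ ∧ AvoidsAll ρ pats}

def p123 : Equiv.Perm (Fin 3) := Equiv.ofBijective ![0, 1, 2] (by decide)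
def p132 : Equiv.Perm (Fin 3) := Equiv.ofBijective ![0, 2, 1] (by decide)
def p213 : Equiv.Perm (Fin 3) := Equiv.ofBijective ![1, 0, 2] (by decide)
def p231 : Equiv.Perm (Fin 3) := Equiv.ofBijective ![1, 2, 0] (by decide)
def p312 : Equiv.Perm (Fin 3) := Equiv.ofBijective ![2, 0, 1] (by decide)
def p321 : Equiv.Perm (Fin 3) := Equiv.ofBijective ![2, 1, 0] (by decide)

/-!
Car `c` ends at spot `ρ⁻¹ c` exactly when its preference is at most `ρ⁻¹ c` and every spot from
the preference to just before `ρ⁻¹ c` is held by an earlier car. So the functions with parking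
permutation `ρ` form a box `∏ c, admissiblePrefs ρ c`, and each of them is a parking function.

A permutation avoids `132`, `213` and `321` iff its values along every increasing triple of
positions are in cyclic order, iff it is a rotation `i ↦ i + s`: the value following `ρ i`
cyclically must sit at position `i + 1`. For the rotation by `s` the sides of the box are
`1, …, s` (cars `0, …, s - 1`, parked at the right end) and `1, …, n - s` (the other cars),
so it contributes `s! (n - s)!`.
-/

section Parking

variable {n : ℕ} {f : Fin n → Fin n}

theorem parkAux_succ_eq_some_iff (c : Fin n) {occ' : Fin n → Option (Fin n)} :
    parkAux f (c.val + 1) = some occ' ↔ ∃ occ, parkAux f c = some occ ∧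
      ∃ m, IsLeast {t | f c ≤ t ∧ occ t = none} m ∧ occ' = Function.update occ m (some c) := by
  rw [parkAux, Option.bind_eq_some_iff]
  simp only [dif_pos c.isLt, Fin.eta]
  refine exists_congr fun occ => and_congr_right fun _ => ?_
  split_ifs with hS
  · have hmin := isLeast_min' _ hS
    rw [coe_filter] at hmin
    simp only [mem_univ, true_and] at hmin
    rw [Option.some.injEq]
    constructor
    · rintro rfl
      exact ⟨_, hmin, rfl⟩
    · rintro ⟨m, hm, rfl⟩
      rw [hmin.unique hm]
  · simp only [false_iff, not_exists, not_and]
    exact fun m hm => absurd ⟨m, by simpa using hm.1⟩ hS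

theorem IsParkingPerm.unique {ρ ρ' : Equiv.Perm (Fin n)} (h : IsParkingPerm f ρ)
    (h' : IsParkingPerm f ρ') : ρ = ρ' := by
  have := congrFun (Option.some.inj (h.symm.trans h'))
  exact Equiv.ext fun i => Option.some.inj (this i)

variable (ρ : Equiv.Perm (Fin n))

def occupancy (k : ℕ) (t : Fin n) : Option (Fin n) :=
  if (ρ t : ℕ) < k then some (ρ t) else none

def admissiblePrefs (c : Fin n) : Finset (Fin n) :=
  univ.filter fun x => x ≤ ρ.symm c ∧ ∀ t, x ≤ t → t < ρ.symm c → ρ t < c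

theorem occupancy_eq_none_iff {k : ℕ} {t : Fin n} : occupancy ρ k t = none ↔ k ≤ ρ t := by
  simp [occupancy]

theorem occupancy_zero : occupancy ρ 0 = fun _ => none := by
  funext t; simp [occupancy]

theorem occupancy_self : occupancy ρ n = fun t => some (ρ t) := by
  funext t; simp [occupancy]

theorem update_occupancy (c : Fin n) :
    Function.update (occupancy ρ c) (ρ.symm c) (some c) = occupancy ρ (c.val + 1) := by
  funext t
  rcases eq_or_ne t (ρ.symm c) with rfl | ht
  · simp [occupancy]
  · have hρt : (ρ t : ℕ) ≠ c := Fin.val_ne_of_ne fun h => ht (ρ.eq_symm_apply.2 h)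
    simp only [Function.update_of_ne ht, occupancy]
    split_ifs <;> first | rfl | omega

theorem eq_occupancy_of_update_eq {c m : Fin n} {occ : Fin n → Option (Fin n)}
    (hm : occ m = none) (h : Function.update occ m (some c) = occupancy ρ (c.val + 1)) :
    occ = occupancy ρ c ∧ m = ρ.symm c := by
  have hρm : ρ m = c := by
    have := congrFun h m
    simp only [Function.update_self, occupancy] at this
    split_ifs at this
    exact (Option.some.inj this).symm
  refine ⟨funext fun t => ?_, ρ.eq_symm_apply.2 hρm⟩
  rcases eq_or_ne t m with rfl | ht
  · simp [hm, occupancy, hρm]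
  · have hρt : (ρ t : ℕ) ≠ c := Fin.val_ne_of_ne fun h' => ht (ρ.injective (h'.trans hρm.symm))
    have := congrFun h t
    simp only [Function.update_of_ne ht, occupancy] at this ⊢
    rw [this]
    split_ifs <;> first | rfl | omega

theorem isLeast_free_iff (c x : Fin n) :
    IsLeast {t | x ≤ t ∧ occupancy ρ c t = none} (ρ.symm c) ↔ x ∈ admissiblePrefs ρ c := by
  simp only [IsLeast, lowerBounds, Set.mem_ofPred_eq, occupancy_eq_none_iff, admissiblePrefs,
    mem_filter, mem_univ, true_and, Equiv.apply_symm_apply, le_refl, and_true]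
  refine and_congr_right fun _ => ⟨fun h t hxt htc => ?_, fun h t ⟨hxt, hct⟩ => ?_⟩
  · by_contra hc
    exact absurd (h ⟨hxt, not_lt.1 hc⟩) (not_le.2 htc)
  · by_contra hc
    exact absurd (h t hxt (not_le.1 hc)) (not_lt.2 hct)

theorem parkAux_succ_eq_occupancy_iff (c : Fin n) :
    parkAux f (c.val + 1) = some (occupancy ρ (c.val + 1)) ↔
      parkAux f c = some (occupancy ρ c) ∧ f c ∈ admissiblePrefs ρ c := by
  rw [parkAux_succ_eq_some_iff]
  constructor
  · rintro ⟨occ, hocc, m, hm, hupd⟩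
    obtain ⟨rfl, rfl⟩ := eq_occupancy_of_update_eq ρ hm.1.2 hupd.symm
    exact ⟨hocc, (isLeast_free_iff ρ c _).1 hm⟩
  · rintro ⟨hocc, hf⟩
    exact ⟨_, hocc, _, (isLeast_free_iff ρ c _).2 hf, (update_occupancy ρ c).symm⟩

theorem parkAux_eq_occupancy_iff {k : ℕ} (hk : k ≤ n) :
    parkAux f k = some (occupancy ρ k) ↔ ∀ c : Fin n, c.val < k → f c ∈ admissiblePrefs ρ c := by
  induction k with
  | zero => simp [parkAux, occupancy_zero]
  | succ k ih =>
    rw [parkAux_succ_eq_occupancy_iff ρ ⟨k, hk⟩, ih (by omega)]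
    constructor
    · rintro ⟨hlt, hk⟩ c hc
      rcases Nat.lt_succ_iff_lt_or_eq.1 hc with hc | hc
      · exact hlt c hc
      · rwa [show c = ⟨k, _⟩ from Fin.ext hc]
    · exact fun h => ⟨fun c hc => h c (by omega), h _ (Nat.lt_succ_self k)⟩

theorem isParkingPerm_iff : IsParkingPerm f ρ ↔ ∀ c, f c ∈ admissiblePrefs ρ c := by
  rw [IsParkingPerm, ← occupancy_self, parkAux_eq_occupancy_iff ρ le_rfl]
  exact forall_congr' fun c => imp_iff_right c.isLt

theorem IsParkingPerm.isParkingFunction (h : IsParkingPerm f ρ) : IsParkingFunction f := by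
  intro i
  calc i.val + 1 = #(Iic i) := (Fin.card_Iic i).symm
    _ ≤ _ := card_le_card_of_injOn ρ (fun t ht => ?_) ρ.injective.injOn
  have := (isParkingPerm_iff ρ).1 h (ρ t)
  simp only [admissiblePrefs, mem_filter, mem_univ, true_and, Equiv.symm_apply_apply] at this
  simp only [coe_Iic, Set.mem_Iic, coe_filter, mem_univ, true_and, Set.mem_ofPred_eq] at ht ⊢
  exact this.1.trans ht

open Classical in
theorem card_isParkingPerm :
    #(univ.filter fun f => IsParkingPerm f ρ) = ∏ c, #(admissiblePrefs ρ c) := by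
  rw [← Fintype.card_piFinset]
  congr 1
  ext f
  simp [isParkingPerm_iff]

end Parking

def CyclicallyOrdered {α : Type*} [LT α] (x y z : α) : Prop :=
  x < y ∧ y < z ∨ y < z ∧ z < x ∨ z < x ∧ x < y

theorem CyclicallyOrdered.rotate {α : Type*} [LT α] {x y z : α} (h : CyclicallyOrdered x y z) :
    CyclicallyOrdered y z x := by
  unfold CyclicallyOrdered at *
  tauto

theorem lt_of_not_cyclicallyOrdered {α : Type*} [LinearOrder α] {x y z : α} (hxy : x ≠ y)
    (hyz : y ≠ z) (hxz : x ≠ z) (h : ¬ CyclicallyOrdered x y z) :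
    x < z ∧ z < y ∨ y < x ∧ x < z ∨ z < y ∧ y < x := by
  unfold CyclicallyOrdered at h
  rcases hxy.lt_or_gt with h1 | h1 <;> rcases hyz.lt_or_gt with h2 | h2 <;>
    rcases hxz.lt_or_gt with h3 | h3 <;> simp_all [not_lt_of_gt]

theorem strictMono_vec3 {α : Type*} [Preorder α] {x y z : α} (hxy : x < y) (hyz : y < z) :
    StrictMono ![x, y, z] :=
  Fin.strictMono_iff_lt_succ.2 fun i => by fin_cases i; exacts [hxy, hyz]

theorem containsPattern_of_comp_eq {m n : ℕ} {ρ : Equiv.Perm (Fin n)} {σ : Equiv.Perm (Fin m)}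
    {g v : Fin m → Fin n} (hg : StrictMono g) (hv : StrictMono v) (h : ∀ a, ρ (g a) = v (σ a)) :
    ContainsPattern ρ σ :=
  ⟨g, hg, fun a b => by rw [h, h, hv.lt_iff_lt]⟩

theorem avoidsAll_iff_cyclicallyOrdered {n : ℕ} (ρ : Equiv.Perm (Fin n)) :
    AvoidsAll ρ [p132, p213, p321] ↔
      ∀ a b c, a < b → b < c → CyclicallyOrdered (ρ a) (ρ b) (ρ c) := by
  simp only [AvoidsAll, List.mem_cons, List.not_mem_nil, or_false, forall_eq_or_imp, forall_eq]
  constructor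
  · rintro ⟨h132, h213, h321⟩ a b c hab hbc
    have occurs {σ : Equiv.Perm (Fin 3)} {x y z : Fin n} (hxy : x < y) (hyz : y < z)
        (hσ : ∀ i, ρ (![a, b, c] i) = ![x, y, z] (σ i)) : ContainsPattern ρ σ :=
      containsPattern_of_comp_eq (strictMono_vec3 hab hbc) (strictMono_vec3 hxy hyz) hσ
    by_contra hcyc
    rcases lt_of_not_cyclicallyOrdered (ρ.injective.ne hab.ne) (ρ.injective.ne hbc.ne)
      (ρ.injective.ne (hab.trans hbc).ne) hcyc with ⟨h1, h2⟩ | ⟨h1, h2⟩ | ⟨h1, h2⟩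
    · exact h132 (occurs h1 h2 fun i => by fin_cases i <;> rfl)
    · exact h213 (occurs h1 h2 fun i => by fin_cases i <;> rfl)
    · exact h321 (occurs h1 h2 fun i => by fin_cases i <;> rfl)
  · intro h
    refine ⟨?_, ?_, ?_⟩ <;>
    · rintro ⟨g, hg, hσ⟩
      have hcyc := h (g 0) (g 1) (g 2) (hg (by decide)) (hg (by decide))
      simp only [CyclicallyOrdered, ← hσ] at hcyc
      revert hcyc
      decide

theorem cyclicallyOrdered_add_right {n : ℕ} {a b c : Fin n} (s : Fin n) (hab : a < b)
    (hbc : b < c) : CyclicallyOrdered (a + s) (b + s) (c + s) := by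
  simp only [CyclicallyOrdered, Fin.lt_def, Fin.val_add_eq_ite] at *
  have := c.isLt
  split_ifs <;> omega

theorem not_cyclicallyOrdered_add_one {n : ℕ} (x y : Fin (n + 1)) :
    ¬ CyclicallyOrdered x y (x + 1) := by
  simp only [CyclicallyOrdered, Fin.lt_def, Fin.val_add_one]
  have := y.isLt
  split_ifs with h
  · simp only [h, Fin.val_last]; omega
  · omega

theorem eq_addRight_of_cyclicallyOrdered {n : ℕ} {ρ : Equiv.Perm (Fin (n + 1))}
    (h : ∀ a b c, a < b → b < c → CyclicallyOrdered (ρ a) (ρ b) (ρ c)) :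
    ρ = Equiv.addRight (ρ 0) := by
  have step (i : Fin n) : ρ i.succ = ρ i.castSucc + 1 := by
    set w := ρ.symm (ρ i.castSucc + 1)
    have hρw : ρ w = ρ i.castSucc + 1 := ρ.apply_symm_apply _
    rcases lt_trichotomy w i.castSucc with hlt | heq | hgt
    · have := (h _ _ _ hlt Fin.castSucc_lt_succ).rotate
      rw [hρw] at this
      exact absurd this (not_cyclicallyOrdered_add_one _ _)
    · have : ρ i.castSucc = ρ i.castSucc + 1 := by rw [← hρw, heq]
      exact absurd (left_eq_add.1 this) (Fin.one_eq_zero_iff.not.2 (by have := i.pos; omega))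
    · rcases (Fin.castSucc_lt_iff_succ_le.1 hgt).eq_or_lt with heq | hlt
      · rw [heq, hρw]
      · have := h _ _ _ Fin.castSucc_lt_succ hlt
        rw [hρw] at this
        exact absurd this (not_cyclicallyOrdered_add_one _ _)
  refine Equiv.ext fun i => ?_
  induction i using Fin.induction with
  | zero => simp
  | succ i ih =>
    rw [Equiv.coe_addRight] at *
    rw [step, ih, ← Fin.coeSucc_eq_succ, add_right_comm]

theorem avoidsAll_iff_exists_eq_addRight {n : ℕ} (ρ : Equiv.Perm (Fin (n + 1))) :
    AvoidsAll ρ [p132, p213, p321] ↔ ∃ s, ρ = Equiv.addRight s := by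
  rw [avoidsAll_iff_cyclicallyOrdered]
  refine ⟨fun h => ⟨_, eq_addRight_of_cyclicallyOrdered h⟩, ?_⟩
  rintro ⟨s, rfl⟩ a b c
  exact cyclicallyOrdered_add_right s

theorem mem_admissiblePrefs_addRight {n : ℕ} {s c x : Fin (n + 1)} :
    x ∈ admissiblePrefs (Equiv.addRight s) c ↔ x ≤ c - s ∧ (c < s → n + 1 - s ≤ (x : ℕ)) := by
  simp only [admissiblePrefs, mem_filter, mem_univ, true_and, Equiv.addRight_symm,
    Equiv.coe_addRight, ← sub_eq_add_neg]
  refine and_congr_right fun hx => ⟨fun h hcs => ?_, fun h t hxt ht => ?_⟩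
  · by_contra hlt
    have hsub := Fin.coe_sub_iff_lt.2 hcs
    have := h x le_rfl (by rw [Fin.lt_def, hsub]; omega)
    rw [Fin.lt_def, Fin.val_add_eq_ite] at this
    rw [Fin.lt_def] at hcs
    split_ifs at this <;> omega
  · rw [Fin.le_def] at hxt
    rw [Fin.lt_def] at ht ⊢
    rw [Fin.val_add_eq_ite]
    by_cases hcs : c < s
    · rw [Fin.coe_sub_iff_lt.2 hcs] at ht
      have := h hcs
      split_ifs <;> omega
    · rw [Fin.coe_sub_iff_le.2 (not_lt.1 hcs)] at ht
      split_ifs <;> omega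

theorem card_admissiblePrefs_addRight {n : ℕ} (s c : Fin (n + 1)) :
    #(admissiblePrefs (Equiv.addRight s) c) =
      if (c : ℕ) < s then (c : ℕ) + 1 else (c : ℕ) - s + 1 := by
  split_ifs with hcs
  · have hcs' : c < s := hcs
    rw [show admissiblePrefs (Equiv.addRight s) c = Icc ⟨n + 1 - s, by omega⟩ (c - s) by
      ext x
      rw [mem_admissiblePrefs_addRight, mem_Icc, Fin.le_def]
      tauto, Fin.card_Icc, Fin.coe_sub_iff_lt.2 hcs']
    dsimp only
    omega
  · have hcs' : ¬ c < s := hcs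
    rw [show admissiblePrefs (Equiv.addRight s) c = Iic (c - s) by
      ext x
      rw [mem_admissiblePrefs_addRight, mem_Iic]
      tauto, Fin.card_Iic, Fin.coe_sub_iff_le.2 (not_lt.1 hcs')]

theorem prod_range_ite_eq_factorial_mul {k m : ℕ} (hk : k ≤ m) :
    ∏ i ∈ range m, (if i < k then i + 1 else i - k + 1) = k.factorial * (m - k).factorial := by
  obtain ⟨r, rfl⟩ := Nat.exists_eq_add_of_le hk
  rw [prod_range_add, Nat.add_sub_cancel_left,
    ← prod_range_add_one_eq_factorial, ← prod_range_add_one_eq_factorial]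
  congr 1 <;> refine prod_congr rfl fun i hi => ?_
  · rw [if_pos (mem_range.1 hi)]
  · rw [if_neg (by omega), Nat.add_sub_cancel_left]

theorem prod_card_admissiblePrefs_addRight {n : ℕ} (s : Fin (n + 1)) :
    ∏ c, #(admissiblePrefs (Equiv.addRight s) c) = (s : ℕ).factorial * (n + 1 - s).factorial := by
  simp_rw [card_admissiblePrefs_addRight]
  rw [Fin.prod_univ_eq_prod_range (fun k => if k < s then k + 1 else k - s + 1)]
  exact prod_range_ite_eq_factorial_mul s.isLt.le

theorem sum_range_factorial_mul_eq_sum_Icc (m : ℕ) :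
    ∑ s ∈ range m, s.factorial * (m - s).factorial =
      ∑ k ∈ Icc 1 m, k.factorial * (m - k).factorial := by
  refine sum_nbij' (fun s => m - s) (fun k => m - k) ?_ ?_ ?_ ?_ ?_ <;>
    intro a ha <;> simp only [mem_range, mem_Icc] at *
  any_goals omega
  rw [Nat.sub_sub_self ha.le, Nat.mul_comm]

theorem pk_succ_eq_sum (n : ℕ) :
    pk (n + 1) [p132, p213, p321] =
      ∑ s : Fin (n + 1), (s : ℕ).factorial * (n + 1 - s).factorial := by
  classical
  have hset : (univ.filter fun f : Fin (n + 1) → Fin (n + 1) => IsParkingFunction f ∧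
        ∃ ρ, IsParkingPerm f ρ ∧ AvoidsAll ρ [p132, p213, p321]) =
      univ.biUnion fun s => univ.filter fun f => IsParkingPerm f (Equiv.addRight s) := by
    ext f
    simp only [mem_filter, mem_univ, true_and, mem_biUnion, avoidsAll_iff_exists_eq_addRight]
    constructor
    · rintro ⟨-, ρ, hρ, s, rfl⟩
      exact ⟨s, hρ⟩
    · rintro ⟨s, hs⟩
      exact ⟨hs.isParkingFunction, _, hs, s, rfl⟩
  rw [pk, Nat.card_eq_fintype_card, Fintype.card_subtype, hset,
    card_biUnion fun s _ t _ hst => disjoint_filter.2 fun f _ hs ht => hst ?_]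
  · simp_rw [card_isParkingPerm, prod_card_admissiblePrefs_addRight]
  · simpa using congrArg (· 0) (hs.unique ht)

theorem stmt12 (n : ℕ) (hn : 1 ≤ n) :
    pk n [p132, p213, p321] =
      ∑ k ∈ Finset.Icc 1 n, k.factorial * (n - k).factorial := by
  obtain ⟨n, rfl⟩ := Nat.exists_eq_add_of_le' hn
  rw [pk_succ_eq_sum, Fin.sum_univ_eq_sum_range (fun s => s.factorial * (n + 1 - s).factorial),
    sum_range_factorial_mul_eq_sum_Icc]
end
end

section
/- The number of parking functions of size n whose parking permutation avoids 213, 312, and 321 equals (2n − 1)·(n−1)!. -/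
open Finset

noncomputable section

/-!
A descent `ρ a > ρ b` with `b` not the last position extends, by the last entry, to an
occurrence of 213, 312 or 321. So the avoiding permutations are those increasing on the first
`n - 1` positions; each is determined by its last value `j`: it is the identity with the entry
`j` moved to the end.

The parking functions with outcome `ρ` form a product set: car `ρ p` parks at spot `p` exactly
when its preference lies in the run of spots ending at `p` that are occupied by earlier cars.
For the permutations above, a spot `p < n - 1` allows `p + 1` preferences and the last spot
allows `n` of them if `j = n - 1` and one otherwise, whence
`n! + (n - 1) (n - 1)! = (2n - 1) (n - 1)!`.
-/

open scoped Nat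

lemma Nat.card_subtype_exists_eq_sum {ι α : Type*} [Fintype ι] [Finite α]
    (P : ι → α → Prop) (hP : ∀ i j a, P i a → P j a → i = j) :
    Nat.card {a // ∃ i, P i a} = ∑ i, Nat.card {a // P i a} := by
  rw [← Nat.card_sigma]
  refine Nat.card_congr (Equiv.ofBijective (fun x => ⟨x.2.1, x.1, x.2.2⟩) ⟨?_, ?_⟩).symm
  · rintro ⟨i, a, ha⟩ ⟨j, b, hb⟩ h
    obtain rfl : a = b := congrArg Subtype.val h
    obtain rfl := hP _ _ _ ha hb
    rfl
  · rintro ⟨a, i, ha⟩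
    exact ⟨⟨i, a, ha⟩, rfl⟩

namespace ParkingFunction

variable {n : ℕ}

lemma parkAux_succ (f : Fin n → Fin n) (k : Fin n) :
    parkAux f (k + 1) = (parkAux f k).bind fun occ =>
      if hS : (univ.filter fun s => f k ≤ s ∧ occ s = none).Nonempty then
        some (Function.update occ ((univ.filter fun s => f k ≤ s ∧ occ s = none).min' hS)
          (some k))
      else none := by
  simp only [parkAux, dif_pos k.isLt, Fin.eta]

/-- The spots occupied after the first `k` cars have parked, when the final outcome is `ρ`. -/
def occupancy (ρ : Equiv.Perm (Fin n)) (k : ℕ) (s : Fin n) : Option (Fin n) :=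
  if (ρ s : ℕ) < k then some (ρ s) else none

lemma occupancy_eq_none_iff {ρ : Equiv.Perm (Fin n)} {k : ℕ} {s : Fin n} :
    occupancy ρ k s = none ↔ k ≤ ρ s := by
  simp [occupancy]

lemma occupancy_succ (ρ : Equiv.Perm (Fin n)) (k : Fin n) :
    occupancy ρ (k + 1) = Function.update (occupancy ρ k) (ρ.symm k) (some k) := by
  ext1 s
  rcases eq_or_ne s (ρ.symm k) with rfl | hs
  · simp [occupancy]
  · have : ρ s ≠ k := fun h => hs (ρ.eq_symm_apply.mpr h)
    simp only [occupancy, Function.update_of_ne hs]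
    grind

/-- The preferences with which the car `ρ p`, arriving when exactly the earlier cars occupy
their spots under `ρ`, parks at spot `p`. -/
def prefsParkingAt (ρ : Equiv.Perm (Fin n)) (p : Fin n) : Finset (Fin n) :=
  univ.filter fun s => s ≤ p ∧ ∀ t, s ≤ t → t < p → ρ t < ρ p

lemma parkAux_succ_eq_occupancy_iff {f : Fin n → Fin n} {ρ : Equiv.Perm (Fin n)} (k : Fin n)
    (h : parkAux f k = some (occupancy ρ k)) :
    parkAux f (k + 1) = some (occupancy ρ (k + 1)) ↔ f k ∈ prefsParkingAt ρ (ρ.symm k) := by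
  have hfree : ∀ s, (f k ≤ s ∧ occupancy ρ k s = none) ↔ f k ≤ s ∧ k ≤ ρ s := by
    simp [occupancy_eq_none_iff]
  have hmem : f k ∈ prefsParkingAt ρ (ρ.symm k) ↔
      ρ.symm k ∈ univ.filter (fun s => f k ≤ s ∧ occupancy ρ k s = none) ∧
        ∀ s ∈ univ.filter (fun s => f k ≤ s ∧ occupancy ρ k s = none),
          ρ.symm k ≤ s := by
    simp only [prefsParkingAt, mem_filter, mem_univ, true_and, hfree, Equiv.apply_symm_apply,
      le_refl, and_true]
    refine and_congr_right fun _ => forall_congr' fun t => ?_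
    constructor
    · intro ht ⟨hft, hkt⟩
      by_contra hlt
      exact absurd (ht hft (not_le.mp hlt)) (not_lt.mpr hkt)
    · intro ht hft htk
      by_contra hkt
      exact absurd (ht ⟨hft, not_lt.mp hkt⟩) (not_le.mpr htk)
  rw [parkAux_succ, h, Option.bind_some, occupancy_succ, hmem]
  split_ifs with hS
  · rw [Option.some_inj, ← min'_eq_iff _ hS]
    constructor
    · intro he
      have hp := (mem_filter.mp (min'_mem _ hS)).2.2
      by_contra hne
      have := congrFun he ((univ.filter fun s => f k ≤ s ∧ occupancy ρ k s = none).min' hS)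
      rw [Function.update_self, Function.update_of_ne hne, hp] at this
      simp at this
    · intro he
      rw [he]
  · simp only [false_iff, not_and]
    exact fun hk _ => hS ⟨_, hk⟩

lemma parkAux_eq_occupancy_of_succ {f : Fin n → Fin n} {ρ : Equiv.Perm (Fin n)} (k : Fin n)
    (h : parkAux f (k + 1) = some (occupancy ρ (k + 1))) :
    parkAux f k = some (occupancy ρ k) := by
  rw [parkAux_succ] at h
  obtain ⟨occ, h₀, hocc⟩ := Option.bind_eq_some_iff.mp h
  split_ifs at hocc with hS
  set p := (univ.filter fun s => f k ≤ s ∧ occ s = none).min' hS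
  have hfree : occ p = none := (mem_filter.mp (min'_mem _ hS)).2.2
  rw [Option.some_inj] at hocc
  have hp : p = ρ.symm k := by
    have hk := congrFun hocc p
    rw [Function.update_self, occupancy] at hk
    split_ifs at hk
    exact ρ.eq_symm_apply.mpr (Option.some_inj.mp hk).symm
  have hk_free : occupancy ρ k (ρ.symm k) = none := by simp [occupancy_eq_none_iff]
  have hocc' : occ = Function.update (Function.update occ p (some k)) p none := by
    rw [Function.update_idem, ← hfree, Function.update_eq_self]
  rw [h₀, hocc', hocc, occupancy_succ, hp, Function.update_idem, ← hk_free,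
    Function.update_eq_self]

lemma isParkingPerm_iff_parkAux_eq_occupancy {f : Fin n → Fin n} {ρ : Equiv.Perm (Fin n)} :
    IsParkingPerm f ρ ↔ parkAux f n = some (occupancy ρ n) := by
  have : occupancy ρ n = fun s => some (ρ s) := funext fun s => if_pos (ρ s).isLt
  rw [this, IsParkingPerm]

theorem isParkingPerm_iff {f : Fin n → Fin n} {ρ : Equiv.Perm (Fin n)} :
    IsParkingPerm f ρ ↔ ∀ k, f k ∈ prefsParkingAt ρ (ρ.symm k) := by
  rw [isParkingPerm_iff_parkAux_eq_occupancy]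
  constructor
  · intro h k
    have hall : ∀ m ≤ n, parkAux f m = some (occupancy ρ m) := fun m hm =>
      Nat.decreasingInduction (motive := fun m _ => parkAux f m = some (occupancy ρ m))
        (fun k hk ih => parkAux_eq_occupancy_of_succ ⟨k, hk⟩ ih) h hm
    exact (parkAux_succ_eq_occupancy_iff k (hall k k.isLt.le)).mp (hall _ k.isLt)
  · intro h
    suffices ∀ m ≤ n, parkAux f m = some (occupancy ρ m) from this n le_rfl
    intro m
    induction m with
    | zero => exact fun _ => congrArg some (funext fun s => by simp [occupancy])
    | succ m ih =>
      exact fun hm =>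
        (parkAux_succ_eq_occupancy_iff ⟨m, hm⟩ (ih (Nat.le_of_succ_le hm))).mpr (h _)

lemma apply_le_of_isParkingPerm {f : Fin n → Fin n} {ρ : Equiv.Perm (Fin n)}
    (h : IsParkingPerm f ρ) (s : Fin n) : f (ρ s) ≤ s := by
  simpa using (mem_filter.mp (isParkingPerm_iff.mp h (ρ s))).2.1

theorem isParkingFunction_of_isParkingPerm {f : Fin n → Fin n} {ρ : Equiv.Perm (Fin n)}
    (h : IsParkingPerm f ρ) : IsParkingFunction f := by
  intro i
  rw [← Fin.card_Iic]
  refine card_le_card_of_injOn ρ (fun s hs => ?_) ρ.injective.injOn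
  simpa using (apply_le_of_isParkingPerm h s).trans (mem_Iic.mp hs)

lemma eq_of_isParkingPerm {f : Fin n → Fin n} {ρ₁ ρ₂ : Equiv.Perm (Fin n)}
    (h₁ : IsParkingPerm f ρ₁) (h₂ : IsParkingPerm f ρ₂) : ρ₁ = ρ₂ := by
  rw [IsParkingPerm, h₁, Option.some_inj] at h₂
  exact Equiv.ext fun s => Option.some_inj.mp (congrFun h₂ s)

theorem card_isParkingPerm (ρ : Equiv.Perm (Fin n)) :
    Nat.card {f : Fin n → Fin n // IsParkingPerm f ρ} = ∏ p, #(prefsParkingAt ρ p) := by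
  classical
  have hpi (f : Fin n → Fin n) :
      IsParkingPerm f ρ ↔ f ∈ Fintype.piFinset fun k => prefsParkingAt ρ (ρ.symm k) := by
    rw [isParkingPerm_iff, Fintype.mem_piFinset]
  rw [Nat.card_congr (Equiv.subtypeEquivRight hpi), Nat.card_eq_finsetCard,
    Fintype.card_piFinset]
  exact Equiv.prod_comp ρ.symm fun p => #(prefsParkingAt ρ p)

lemma containsPattern_of_descent (π : Equiv.Perm (Fin n)) {x y z : Fin n}
    (hxy : x < y) (hyz : y < z) (hdesc : π y < π x) :
    ∃ σ ∈ [p213, p312, p321], ContainsPattern π σ := by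
  have hg : StrictMono ![x, y, z] := by
    refine Fin.strictMono_iff_lt_succ.mpr fun i => ?_
    fin_cases i
    exacts [hxy, hyz]
  have hz : π z ≠ π x ∧ π z ≠ π y :=
    ⟨π.injective.ne (hxy.trans hyz).ne', π.injective.ne hyz.ne'⟩
  rcases lt_or_gt_of_ne hz.1 with hzx | hxz
  · rcases lt_or_gt_of_ne hz.2 with hzy | hyz'
    · refine ⟨p321, by simp, ![x, y, z], hg, fun a b => ?_⟩
      fin_cases a <;> fin_cases b <;> simp [p321] <;> order
    · refine ⟨p312, by simp, ![x, y, z], hg, fun a b => ?_⟩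
      fin_cases a <;> fin_cases b <;> simp [p312] <;> order
  · refine ⟨p213, by simp, ![x, y, z], hg, fun a b => ?_⟩
    fin_cases a <;> fin_cases b <;> simp [p213] <;> order

section MoveToEnd

variable {m : ℕ}

/-- The permutation with one-line notation `0 … (j-1) (j+1) … m j`. -/
def moveToEnd (j : Fin (m + 1)) : Equiv.Perm (Fin (m + 1)) :=
  finSuccEquivLast.trans (finSuccEquiv' j).symm

@[simp]
lemma moveToEnd_last (j : Fin (m + 1)) : moveToEnd j (Fin.last m) = j := by
  simp [moveToEnd]

@[simp]
lemma moveToEnd_castSucc (j : Fin (m + 1)) (q : Fin m) :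
    moveToEnd j q.castSucc = j.succAbove q := by
  simp [moveToEnd]

lemma strictMono_moveToEnd_comp_castSucc (j : Fin (m + 1)) :
    StrictMono (moveToEnd j ∘ Fin.castSucc) := by
  simpa [Function.comp_def] using Fin.strictMono_succAbove j

lemma strictMono_comp_castSucc_iff_exists_eq_moveToEnd (ρ : Equiv.Perm (Fin (m + 1))) :
    StrictMono (ρ ∘ Fin.castSucc) ↔ ∃ j, ρ = moveToEnd j := by
  constructor
  · intro hρ
    have hrange : Set.range (ρ ∘ Fin.castSucc) = Set.range (ρ (Fin.last m)).succAbove := by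
      ext v
      simp only [Fin.range_succAbove, Set.mem_range, Function.comp_apply, Set.mem_compl_iff,
        Set.mem_singleton_iff, ← ρ.eq_symm_apply]
      rw [Fin.exists_castSucc_eq, Ne, ρ.symm_apply_eq]
    have hcomp := (hρ.range_inj (Fin.strictMono_succAbove _)).mp hrange
    refine ⟨ρ (Fin.last m), Equiv.ext fun s => ?_⟩
    induction s using Fin.lastCases with
    | last => simp
    | cast q => simpa using congrFun hcomp q
  · rintro ⟨j, rfl⟩
    exact strictMono_moveToEnd_comp_castSucc j

lemma injective_moveToEnd : Function.Injective (moveToEnd (m := m)) := fun i j h => by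
  simpa using congrArg (· (Fin.last m)) h

theorem avoidsAll_iff_strictMono_comp_castSucc (ρ : Equiv.Perm (Fin (m + 1))) :
    AvoidsAll ρ [p213, p312, p321] ↔ StrictMono (ρ ∘ Fin.castSucc) := by
  constructor
  · intro hav a b hab
    by_contra hle
    have hdesc : ρ b.castSucc < ρ a.castSucc :=
      lt_of_le_of_ne (not_lt.mp hle) (ρ.injective.ne (Fin.castSucc_injective m |>.ne hab.ne'))
    obtain ⟨σ, hσ, hcont⟩ :=
      containsPattern_of_descent ρ (Fin.castSucc_lt_castSucc_iff.mpr hab)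
        (Fin.castSucc_lt_last b) hdesc
    exact hav σ hσ hcont
  · rintro hρ σ hσ ⟨g, hg, hiff⟩
    have hσ10 : σ 1 < σ 0 := by
      simp only [List.mem_cons, List.not_mem_nil, or_false] at hσ
      rcases hσ with rfl | rfl | rfl <;> decide
    obtain ⟨b, hb⟩ :=
      Fin.exists_castSucc_eq.mpr (Fin.ne_last_of_lt (hg (by decide : (1 : Fin 3) < 2)))
    obtain ⟨a, ha⟩ :=
      Fin.exists_castSucc_eq.mpr (Fin.ne_last_of_lt (hg (by decide : (0 : Fin 3) < 2)))
    have hab : a < b := by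
      rw [← Fin.castSucc_lt_castSucc_iff, ha, hb]
      exact hg (by decide)
    have hmono := hρ hab
    simp only [Function.comp_apply, ha, hb] at hmono
    exact lt_asymm hmono ((hiff 1 0).mp hσ10)

lemma prefsParkingAt_castSucc {ρ : Equiv.Perm (Fin (m + 1))}
    (hρ : StrictMono (ρ ∘ Fin.castSucc)) (q : Fin m) :
    prefsParkingAt ρ q.castSucc = Iic q.castSucc := by
  ext s
  simp only [prefsParkingAt, mem_filter, mem_univ, true_and, mem_Iic]
  refine and_iff_left_of_imp fun _ t _ ht => ?_
  obtain ⟨u, rfl⟩ := Fin.exists_castSucc_eq.mpr (Fin.ne_last_of_lt ht)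
  exact hρ (Fin.castSucc_lt_castSucc_iff.mp ht)

lemma card_prefsParkingAt_moveToEnd_last (j : Fin (m + 1)) :
    #(prefsParkingAt (moveToEnd j) (Fin.last m)) = if j = Fin.last m then m + 1 else 1 := by
  split_ifs with hj
  · subst hj
    have hall : ∀ s ∈ univ, s ≤ Fin.last m ∧ ∀ t, s ≤ t → t < Fin.last m →
        moveToEnd (Fin.last m) t < moveToEnd (Fin.last m) (Fin.last m) := fun s _ =>
      ⟨Fin.le_last s, fun t _ ht => lt_of_le_of_ne (by simpa using Fin.le_last _)
        ((moveToEnd (Fin.last m)).injective.ne ht.ne)⟩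
    rw [prefsParkingAt, filter_true_of_mem hall, card_univ, Fintype.card_fin]
  · obtain ⟨j, rfl⟩ := Fin.exists_castSucc_eq.mpr hj
    refine card_eq_one.mpr ⟨Fin.last m, ext fun s => ?_⟩
    simp only [prefsParkingAt, mem_filter, mem_univ, true_and, mem_singleton, moveToEnd_last]
    constructor
    · rintro ⟨-, hrun⟩
      by_contra hs
      obtain ⟨u, rfl⟩ := Fin.exists_castSucc_eq.mpr hs
      have := hrun (max u j).castSucc (Fin.castSucc_le_castSucc_iff.mpr (le_max_left u j))
        (Fin.castSucc_lt_last _)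
      rw [moveToEnd_castSucc, Fin.succAbove_lt_iff_castSucc_lt,
        Fin.castSucc_lt_castSucc_iff] at this
      exact (le_max_right u j).not_gt this
    · rintro rfl
      exact ⟨le_rfl, fun t h₁ h₂ => absurd h₂ h₁.not_gt⟩

theorem card_isParkingPerm_moveToEnd (j : Fin (m + 1)) :
    Nat.card {f : Fin (m + 1) → Fin (m + 1) // IsParkingPerm f (moveToEnd j)} =
      m ! * if j = Fin.last m then m + 1 else 1 := by
  rw [card_isParkingPerm, Fin.prod_univ_castSucc, card_prefsParkingAt_moveToEnd_last]
  congr 1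
  simp only [prefsParkingAt_castSucc (strictMono_moveToEnd_comp_castSucc j), Fin.card_Iic,
    Fin.val_castSucc]
  rw [Fin.prod_univ_eq_prod_range (· + 1) m, prod_range_add_one_eq_factorial]

end MoveToEnd

theorem pk_succ (m : ℕ) : pk (m + 1) [p213, p312, p321] = (2 * m + 1) * m ! := by
  have hchar : ∀ f : Fin (m + 1) → Fin (m + 1), (IsParkingFunction f ∧
      ∃ ρ, IsParkingPerm f ρ ∧ AvoidsAll ρ [p213, p312, p321]) ↔
        ∃ j, IsParkingPerm f (moveToEnd j) := by
    intro f
    simp only [avoidsAll_iff_strictMono_comp_castSucc,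
      strictMono_comp_castSucc_iff_exists_eq_moveToEnd]
    constructor
    · rintro ⟨-, ρ, hρ, j, rfl⟩
      exact ⟨j, hρ⟩
    · rintro ⟨j, hj⟩
      exact ⟨isParkingFunction_of_isParkingPerm hj, _, hj, j, rfl⟩
  rw [pk, Nat.card_congr (Equiv.subtypeEquivRight hchar),
    Nat.card_subtype_exists_eq_sum (fun j f => IsParkingPerm f (moveToEnd j))
      fun i j f hi hj => injective_moveToEnd (eq_of_isParkingPerm hi hj)]
  simp only [card_isParkingPerm_moveToEnd, Fin.sum_univ_castSucc, Fin.castSucc_ne_last,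
    if_false, if_true, sum_const, card_univ, Fintype.card_fin, smul_eq_mul]
  ring

end ParkingFunction

theorem stmt13 (n : ℕ) (hn : 1 ≤ n) :
    pk n [p213, p312, p321] = (2 * n - 1) * (n - 1).factorial := by
  obtain ⟨m, rfl⟩ := Nat.exists_eq_add_of_le' hn
  rw [ParkingFunction.pk_succ, Nat.add_sub_cancel]
  congr 1
end
end

section
/- The number of parking functions of size n whose parking permutation avoids both 132 and 231 equals (n+1)!/2. -/
open Finset

noncomputable section

/-!
A permutation avoids both 132 and 231 exactly when it has no peak, i.e. when every sublevel set
`{s | ρ s ≤ k}` is an interval of spots. For a parking permutation this means that every car parks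
right next to the block of spots filled by the earlier cars: either just left of it, which forces
its preference to be that very spot, or just right of it, which allows any preference from the
block's left end up to that spot. So car `k + 1` has `k + 3` options, while the preference of
car `0` is pinned down by the number of later cars parking on the left, the final block being all
of `[0, n)`. The count is therefore `∏_{k < n - 1} (k + 3) = (n + 1)! / 2`.
-/

namespace Parking

variable {n : ℕ}

def freeSpotsFrom (occ : Fin n → Option (Fin n)) (a : Fin n) : Finset (Fin n) :=
  univ.filter fun s => a ≤ s ∧ occ s = none

lemma parkAux_succ_of_lt (f : Fin n → Fin n) {k : ℕ} (hk : k < n) :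
    parkAux f (k + 1) = (parkAux f k).bind fun occ =>
      if hS : (freeSpotsFrom occ (f ⟨k, hk⟩)).Nonempty then
        some (Function.update occ ((freeSpotsFrom occ (f ⟨k, hk⟩)).min' hS) (some ⟨k, hk⟩))
      else none := by
  simp only [parkAux, dif_pos hk]; rfl

lemma exists_parkAux_of_succ {f : Fin n → Fin n} {k : ℕ} {occ' : Fin n → Option (Fin n)}
    (h : parkAux f (k + 1) = some occ') :
    ∃ occ, parkAux f k = some occ ∧ ∀ s c, occ s = some c → occ' s = some c := by
  obtain ⟨occ, hocc, h⟩ := Option.bind_eq_some_iff.1 h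
  refine ⟨occ, hocc, fun s c hs => ?_⟩
  split_ifs at h with hk hS <;> cases h
  · have hfree := (mem_filter.1 (min'_mem _ hS)).2.2
    rw [Function.update_of_ne (by rintro rfl; simp_all)]
    exact hs
  · exact hs

lemma exists_parkAux_of_le {f : Fin n → Fin n} {k m : ℕ} {occ' : Fin n → Option (Fin n)}
    (h : parkAux f m = some occ') (hkm : k ≤ m) :
    ∃ occ, parkAux f k = some occ ∧ ∀ s c, occ s = some c → occ' s = some c := by
  induction m generalizing occ' with
  | zero => exact ⟨occ', by rwa [Nat.le_zero.1 hkm], fun _ _ => id⟩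
  | succ m ih =>
    rcases hkm.eq_or_lt with rfl | hlt
    · exact ⟨occ', h, fun _ _ => id⟩
    obtain ⟨occm, hm, hmono⟩ := exists_parkAux_of_succ h
    obtain ⟨occ, hk, hmono'⟩ := ih hm (Nat.le_of_lt_succ hlt)
    exact ⟨occ, hk, fun s c hs => hmono s c (hmono' s c hs)⟩

def occupancyBelow (ρ : Equiv.Perm (Fin n)) (k : ℕ) : Fin n → Option (Fin n) :=
  fun s => if (ρ s).val < k then some (ρ s) else none

lemma mem_freeSpotsFrom_occupancyBelow {ρ : Equiv.Perm (Fin n)} {k : ℕ} {a s : Fin n} :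
    s ∈ freeSpotsFrom (occupancyBelow ρ k) a ↔ a ≤ s ∧ k ≤ (ρ s).val := by
  simp [freeSpotsFrom, occupancyBelow]

lemma occupancyBelow_eq_some {ρ : Equiv.Perm (Fin n)} {k : ℕ} {s c : Fin n} :
    occupancyBelow ρ k s = some c ↔ ρ s = c ∧ c.val < k := by
  unfold occupancyBelow
  split_ifs with h
  · simp only [Option.some.injEq]
    exact ⟨fun hc => ⟨hc, hc ▸ h⟩, And.left⟩
  · simp only [false_iff, not_and]
    rintro rfl; exact h

lemma update_occupancyBelow (ρ : Equiv.Perm (Fin n)) {k : ℕ} (hk : k < n) :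
    Function.update (occupancyBelow ρ k) (ρ.symm ⟨k, hk⟩) (some ⟨k, hk⟩)
      = occupancyBelow ρ (k + 1) := by
  funext s
  rcases eq_or_ne s (ρ.symm ⟨k, hk⟩) with rfl | hs
  · simp [occupancyBelow]
  · have : (ρ s).val ≠ k := fun h => hs (ρ.eq_symm_apply.2 (Fin.ext h))
    simp only [Function.update_of_ne hs, occupancyBelow, Nat.lt_succ_iff_lt_or_eq, this, or_false]

lemma parkAux_succ_eq_occupancyBelow_iff {f : Fin n → Fin n} {ρ : Equiv.Perm (Fin n)} {k : ℕ}
    (hk : k < n) (h : parkAux f k = some (occupancyBelow ρ k)) :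
    parkAux f (k + 1) = some (occupancyBelow ρ (k + 1)) ↔
      f ⟨k, hk⟩ ≤ ρ.symm ⟨k, hk⟩ ∧ ∀ s, f ⟨k, hk⟩ ≤ s → s < ρ.symm ⟨k, hk⟩ → ρ s < ⟨k, hk⟩ := by
  set T := freeSpotsFrom (occupancyBelow ρ k) (f ⟨k, hk⟩)
  rw [parkAux_succ_of_lt f hk, h, Option.bind_some]
  constructor
  · intro hstep
    split_ifs at hstep with hS
    have hpark := congrFun (Option.some_injective _ hstep) (T.min' hS)
    rw [Function.update_self, eq_comm, occupancyBelow_eq_some] at hpark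
    have hmin : T.min' hS = ρ.symm ⟨k, hk⟩ := ρ.eq_symm_apply.2 hpark.1
    refine ⟨hmin ▸ (mem_freeSpotsFrom_occupancyBelow.1 (T.min'_mem hS)).1, fun s hfs hs => ?_⟩
    by_contra! hks
    exact absurd (T.min'_le s (mem_freeSpotsFrom_occupancyBelow.2 ⟨hfs, hks⟩)) (hmin ▸ hs).not_ge
  · rintro ⟨hfirst, hearlier⟩
    have hmem : ρ.symm ⟨k, hk⟩ ∈ T := mem_freeSpotsFrom_occupancyBelow.2 ⟨hfirst, by simp⟩
    have hmin : T.min' ⟨_, hmem⟩ = ρ.symm ⟨k, hk⟩ := by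
      refine le_antisymm (T.min'_le _ hmem) (T.le_min' _ _ fun s hs => ?_)
      obtain ⟨hfs, hks⟩ := mem_freeSpotsFrom_occupancyBelow.1 hs
      by_contra! hlt
      exact absurd (hearlier s hfs hlt) (not_lt.2 hks)
    rw [dif_pos ⟨_, hmem⟩, hmin, update_occupancyBelow]

lemma parkAux_eq_occupancyBelow {f : Fin n → Fin n} {ρ : Equiv.Perm (Fin n)}
    (hρ : IsParkingPerm f ρ) {k : ℕ} (hk : k ≤ n) :
    parkAux f k = some (occupancyBelow ρ k) := by
  induction k with
  | zero => rfl
  | succ k ih =>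
    have hprev := ih (by omega)
    obtain ⟨occ, hstage, hfinal⟩ := exists_parkAux_of_le hρ hk
    rw [hstage]
    rw [parkAux_succ_of_lt f hk, hprev, Option.bind_some] at hstage
    split_ifs at hstage with hS
    cases hstage
    -- parked cars never move, so car `k` took the spot `ρ⁻¹ k`
    have hpark := hfinal _ _ (Function.update_self _ _ _)
    rw [Option.some_inj, ← ρ.eq_symm_apply] at hpark
    rw [hpark, update_occupancyBelow]

theorem isParkingPerm_iff {f : Fin n → Fin n} {ρ : Equiv.Perm (Fin n)} :
    IsParkingPerm f ρ ↔ ∀ c, f c ≤ ρ.symm c ∧ ∀ s, f c ≤ s → s < ρ.symm c → ρ s < c := by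
  constructor
  · intro hρ c
    exact (parkAux_succ_eq_occupancyBelow_iff c.isLt (parkAux_eq_occupancyBelow hρ c.isLt.le)).1
      (parkAux_eq_occupancyBelow hρ c.isLt)
  · intro hgreedy
    have hstage : ∀ k ≤ n, parkAux f k = some (occupancyBelow ρ k) := by
      intro k hk
      induction k with
      | zero => rfl
      | succ k ih =>
        exact (parkAux_succ_eq_occupancyBelow_iff hk (ih (by omega))).2 (hgreedy ⟨k, hk⟩)
    rw [IsParkingPerm, hstage n le_rfl]
    congr
    funext s
    simp [occupancyBelow]

theorem IsParkingPerm.isParkingFunction {f : Fin n → Fin n} {ρ : Equiv.Perm (Fin n)}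
    (hρ : IsParkingPerm f ρ) : IsParkingFunction f := by
  intro i
  calc i.val + 1 = #(univ.filter fun c => ρ.symm c ≤ i) := by
        rw [← Fin.card_Iic, card_equiv ρ]
        simp
    _ ≤ #(univ.filter fun c => f c ≤ i) :=
        card_le_card (monotone_filter_right _ fun c _ h => (isParkingPerm_iff.1 hρ c).1.trans h)

def HasNoPeak (ρ : Equiv.Perm (Fin n)) : Prop :=
  ∀ i j k, i < j → j < k → ¬ (ρ i < ρ j ∧ ρ k < ρ j)

lemma containsPattern_of_comp_eq {m : ℕ} {ρ : Equiv.Perm (Fin n)} {σ : Equiv.Perm (Fin m)}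
    {g h : Fin m → Fin n} (hg : StrictMono g) (hh : StrictMono h) (he : ∀ a, ρ (g a) = h (σ a)) :
    ContainsPattern ρ σ :=
  ⟨g, hg, fun a b => by rw [he, he, hh.lt_iff_lt]⟩

theorem avoidsAll_p132_p231_iff {ρ : Equiv.Perm (Fin n)} :
    AvoidsAll ρ [p132, p231] ↔ HasNoPeak ρ := by
  constructor
  · rintro hav i j k hij hjk ⟨hij', hkj'⟩
    have hg : StrictMono ![i, j, k] := by simp [hij, hjk]
    rcases lt_or_gt_of_ne (ρ.injective.ne (hij.trans hjk).ne) with hik' | hki'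
    · exact hav p132 (by simp) (containsPattern_of_comp_eq (h := ![ρ i, ρ k, ρ j]) hg
        (by simp [hik', hkj']) fun a => by fin_cases a <;> rfl)
    · exact hav p231 (by simp) (containsPattern_of_comp_eq (h := ![ρ k, ρ i, ρ j]) hg
        (by simp [hki', hij']) fun a => by fin_cases a <;> rfl)
  · rintro hpeak σ hσ ⟨g, hg, hpat⟩
    have hσpeak : σ 0 < σ 1 ∧ σ 2 < σ 1 := by
      simp only [List.mem_cons, List.not_mem_nil, or_false] at hσ
      rcases hσ with rfl | rfl <;> decide
    exact hpeak _ _ _ (hg (by decide : (0 : Fin 3) < 1)) (hg (by decide : (1 : Fin 3) < 2))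
      ⟨(hpat 0 1).1 hσpeak.1, (hpat 2 1).1 hσpeak.2⟩

lemma HasNoPeak.apply_le_of_between {ρ : Equiv.Perm (Fin n)} (hρ : HasNoPeak ρ) {a t b x : Fin n}
    (hat : a ≤ t) (htb : t ≤ b) (ha : ρ a ≤ x) (hb : ρ b ≤ x) : ρ t ≤ x := by
  rcases hat.eq_or_lt with rfl | hat
  · exact ha
  rcases htb.eq_or_lt with rfl | htb
  · exact hb
  by_contra! h
  exact hρ a t b hat htb ⟨ha.trans_lt h, hb.trans_lt h⟩

lemma HasNoPeak.adjacent_of_sublevel_eq_Icc {ρ : Equiv.Perm (Fin n)} (hpk : HasNoPeak ρ)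
    {k lo : ℕ} (hblock : ∀ t : Fin n, (ρ t).val ≤ k ↔ t.val ∈ Icc lo (lo + k)) {p : Fin n}
    (hp : (ρ p).val = k + 1) : p.val + 1 = lo ∨ p.val = lo + k + 1 := by
  obtain ⟨t₀, ht₀⟩ := ρ.surjective ⟨0, by omega⟩
  have ht₀_mem := (hblock t₀).1 (by simp [ht₀])
  have hp_notMem := (hblock p).not.1 (by omega)
  have hbetween : ∀ w : Fin n, (p < w ∧ w < t₀ ∨ t₀ < w ∧ w < p) → w.val ∈ Icc lo (lo + k) := by
    intro w hw
    have ht₀p : ρ t₀ ≤ ρ p := by simp [ht₀, Fin.le_def]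
    have hw_le : ρ w ≤ ρ p := by
      rcases hw with ⟨h1, h2⟩ | ⟨h1, h2⟩
      · exact hpk.apply_le_of_between h1.le h2.le le_rfl ht₀p
      · exact hpk.apply_le_of_between h1.le h2.le ht₀p le_rfl
    have hw_ne : w ≠ p := by
      rintro rfl
      rcases hw with ⟨h, -⟩ | ⟨-, h⟩ <;> exact lt_irrefl _ h
    have := Fin.val_ne_of_ne (ρ.injective.ne hw_ne)
    exact (hblock w).1 (by rw [Fin.le_def] at hw_le; omega)
  simp only [mem_Icc, not_and_or, not_le] at ht₀_mem hp_notMem hbetween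
  rcases hp_notMem with hlt | hlt
  · refine Or.inl (by_contra fun hne => ?_)
    have := hbetween ⟨p + 1, by omega⟩
      (Or.inl ⟨Fin.lt_def.2 (by simp), Fin.lt_def.2 (by simp; omega)⟩)
    simp only at this
    omega
  · refine Or.inr (by_contra fun hne => ?_)
    have := hbetween ⟨lo + k + 1, by omega⟩
      (Or.inr ⟨Fin.lt_def.2 (by simp; omega), Fin.lt_def.2 (by simp; omega)⟩)
    simp only at this
    omega

def pref (f : Fin n → Fin n) (k : ℕ) : ℕ := if h : k < n then f ⟨k, h⟩ else 0

lemma pref_of_lt (f : Fin n → Fin n) {k : ℕ} (hk : k < n) : pref f k = f ⟨k, hk⟩ := dif_pos hk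

def leftEnd (f : Fin n → Fin n) : ℕ → ℕ
  | 0 => pref f 0
  | k + 1 => if pref f (k + 1) < leftEnd f k then leftEnd f k - 1 else leftEnd f k

lemma leftEnd_succ_of_lt (f : Fin n → Fin n) {k : ℕ} (h : pref f (k + 1) < leftEnd f k) :
    leftEnd f (k + 1) = leftEnd f k - 1 := if_pos h

lemma leftEnd_succ_of_le (f : Fin n → Fin n) {k : ℕ} (h : leftEnd f k ≤ pref f (k + 1)) :
    leftEnd f (k + 1) = leftEnd f k := if_neg (not_lt.2 h)

-- When cars park contiguously, cars `0, …, k` occupy exactly the spots of `block f k`.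
def block (f : Fin n → Fin n) (k : ℕ) : Finset ℕ := Icc (leftEnd f k) (leftEnd f k + k)

def spot (f : Fin n → Fin n) : ℕ → ℕ
  | 0 => pref f 0
  | k + 1 => if pref f (k + 1) < leftEnd f k then leftEnd f k - 1 else leftEnd f k + k + 1

def ParksContiguously (f : Fin n → Fin n) : Prop :=
  ∀ k, k + 1 < n → pref f (k + 1) + 1 = leftEnd f k ∨
    (leftEnd f k ≤ pref f (k + 1) ∧ pref f (k + 1) ≤ leftEnd f k + k + 1 ∧
      leftEnd f k + k + 1 < n)

section Blocks

variable (f : Fin n → Fin n)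

lemma block_subset_block_succ (k : ℕ) : block f k ⊆ block f (k + 1) := by
  apply Icc_subset_Icc <;> simp only [leftEnd] <;> split_ifs <;> omega

lemma block_mono : Monotone (block f) := monotone_nat_of_le_succ (block_subset_block_succ f)

lemma spot_mem_block (k : ℕ) : spot f k ∈ block f k := by
  cases k with
  | zero => simp [spot, block, leftEnd]
  | succ k => simp only [spot, block, leftEnd, mem_Icc]; split_ifs <;> omega

lemma spot_succ_notMem_block (k : ℕ) : spot f (k + 1) ∉ block f k := by
  simp only [spot, block, mem_Icc]; split_ifs <;> omega

lemma spot_mem_block_iff {j k : ℕ} : spot f j ∈ block f k ↔ j ≤ k := by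
  refine ⟨fun h => ?_, fun h => block_mono f h (spot_mem_block f j)⟩
  by_contra! hkj
  obtain ⟨i, rfl⟩ := Nat.exists_eq_add_of_lt hkj
  exact spot_succ_notMem_block f (k + i) (block_mono f (by omega) h)

lemma spot_injective : Function.Injective (spot f) := fun i j h =>
  le_antisymm ((spot_mem_block_iff f).1 (h ▸ spot_mem_block f j))
    ((spot_mem_block_iff f).1 (h ▸ spot_mem_block f i))

end Blocks

namespace ParksContiguously

variable {f : Fin n → Fin n} (hQ : ParksContiguously f)
include hQ

lemma leftEnd_add_lt {k : ℕ} (hk : k < n) : leftEnd f k + k < n := by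
  induction k with
  | zero => simp [leftEnd, pref_of_lt f hk]
  | succ k ih =>
    have := ih (by omega)
    simp only [leftEnd]
    rcases hQ k hk with h | h <;> split_ifs <;> omega

lemma spot_lt {k : ℕ} (hk : k < n) : spot f k < n :=
  ((mem_Icc.1 (spot_mem_block f k)).2).trans_lt (hQ.leftEnd_add_lt hk)

lemma pref_le_spot {k : ℕ} (hk : k < n) : pref f k ≤ spot f k := by
  cases k with
  | zero => rfl
  | succ k => simp only [spot]; rcases hQ k hk with h | h <;> split_ifs <;> omega

lemma mem_block_of_pref_le_of_lt_spot {k s : ℕ} (hk : k + 1 < n) (h1 : pref f (k + 1) ≤ s)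
    (h2 : s < spot f (k + 1)) : s ∈ block f k := by
  simp only [spot] at h2
  simp only [block, mem_Icc]
  rcases hQ k hk with h | h <;> split_ifs at h2 <;> omega

def spotPerm : Equiv.Perm (Fin n) :=
  Equiv.ofBijective (fun c => ⟨spot f c, hQ.spot_lt c.isLt⟩)
    (Finite.injective_iff_bijective.1 fun _ _ h => Fin.ext (spot_injective f (congrArg Fin.val h)))

lemma spotPerm_val (c : Fin n) : (hQ.spotPerm c).val = spot f c := rfl

theorem isParkingPerm : IsParkingPerm f hQ.spotPerm.symm := by
  refine isParkingPerm_iff.2 fun c => ?_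
  simp only [Equiv.symm_symm, Fin.le_def, Fin.lt_def, spotPerm_val]
  refine ⟨pref_of_lt f c.isLt ▸ hQ.pref_le_spot c.isLt, fun s h1 h2 => ?_⟩
  obtain ⟨j, rfl⟩ := hQ.spotPerm.surjective s
  rw [spotPerm_val] at h1 h2
  rw [Equiv.symm_apply_apply]
  obtain ⟨_ | k, hc⟩ := c
  · rw [← pref_of_lt f hc] at h1
    exact absurd h2 (not_lt.2 h1)
  · rw [← pref_of_lt f hc] at h1
    exact Nat.lt_succ_of_le ((spot_mem_block_iff f).1
      (hQ.mem_block_of_pref_le_of_lt_spot hc h1 h2))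

theorem hasNoPeak : HasNoPeak hQ.spotPerm.symm := by
  intro a b d hab hbd ⟨hba, hbd'⟩
  obtain ⟨i, rfl⟩ := hQ.spotPerm.surjective a
  obtain ⟨j, rfl⟩ := hQ.spotPerm.surjective b
  obtain ⟨l, rfl⟩ := hQ.spotPerm.surjective d
  simp only [Equiv.symm_apply_apply, Fin.lt_def, spotPerm_val] at hab hbd hba hbd'
  have hi := (spot_mem_block_iff f (k := j - 1)).2 (by omega : i.val ≤ j - 1)
  have hl := (spot_mem_block_iff f (k := j - 1)).2 (by omega : l.val ≤ j - 1)
  have hj : spot f j ∈ block f (j - 1) := by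
    simp only [block, mem_Icc] at hi hl ⊢; omega
  have := (spot_mem_block_iff f).1 hj
  omega

end ParksContiguously

section Forward

variable {f : Fin n → Fin n} {ρ : Equiv.Perm (Fin n)} (hρ : IsParkingPerm f ρ) (hpk : HasNoPeak ρ)
include hρ hpk

lemma parks_next_to_block {k : ℕ} {c p : Fin n} (hc : c.val = k + 1) (hpc : ρ p = c)
    (hblock : ∀ t : Fin n, (ρ t).val ≤ k ↔ t.val ∈ block f k) :
    ((f c).val + 1 = leftEnd f k ∧ p.val + 1 = leftEnd f k) ∨
      (leftEnd f k ≤ f c ∧ f c ≤ p ∧ p.val = leftEnd f k + k + 1) := by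
  have hadj := hpk.adjacent_of_sublevel_eq_Icc hblock (p := p) (by rw [hpc, hc])
  obtain ⟨hfirst, hearlier⟩ := isParkingPerm_iff.1 hρ c
  rw [show ρ.symm c = p by rw [← hpc, Equiv.symm_apply_apply], Fin.le_def] at hfirst
  rw [show ρ.symm c = p by rw [← hpc, Equiv.symm_apply_apply]] at hearlier
  have hbelow : (f c).val < p.val → (f c).val ∈ block f k := fun h =>
    (hblock _).1 (by have := Fin.lt_def.1 (hearlier _ le_rfl (Fin.lt_def.2 h)); omega)
  simp only [block, mem_Icc] at hbelow
  rcases hadj with hadj | hadj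
  · refine Or.inl ⟨?_, hadj⟩
    by_contra
    have := hbelow (by omega)
    omega
  · refine Or.inr ⟨?_, hfirst, hadj⟩
    by_contra! hlt
    have := hbelow (by omega)
    omega

lemma sublevel_eq_block {k : ℕ} (hk : k < n) (t : Fin n) : (ρ t).val ≤ k ↔ t.val ∈ block f k := by
  induction k generalizing t with
  | zero =>
    obtain ⟨hfirst, hearlier⟩ := isParkingPerm_iff.1 hρ ⟨0, hk⟩
    have hpark : ρ.symm ⟨0, hk⟩ = f ⟨0, hk⟩ := by
      refine (hfirst.lt_or_eq.resolve_left fun hlt => ?_).symm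
      exact Nat.not_lt_zero _ (hearlier _ le_rfl hlt)
    rw [Nat.le_zero, ← Fin.ext_iff (b := ⟨0, hk⟩), ← ρ.eq_symm_apply, hpark]
    simp [block, leftEnd, pref_of_lt f hk, Fin.ext_iff]
  | succ k ih =>
    obtain ⟨p, hpc⟩ := ρ.surjective ⟨k + 1, hk⟩
    have hnext := parks_next_to_block hρ hpk rfl hpc (ih (by omega))
    rcases eq_or_ne t p with rfl | htp
    · simp only [hpc, le_refl, true_iff, block, leftEnd, pref_of_lt f hk, mem_Icc]
      split_ifs <;> omega
    · have hρt : (ρ t).val ≠ k + 1 := fun h => htp (ρ.injective (Fin.ext (by rw [h, hpc])))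
      have := Fin.val_ne_of_ne htp
      rw [show (ρ t).val ≤ k + 1 ↔ (ρ t).val ≤ k by omega, ih (by omega)]
      simp only [block, leftEnd, pref_of_lt f hk, mem_Icc]
      split_ifs <;> omega

theorem parksContiguously : ParksContiguously f := by
  intro k hk
  obtain ⟨p, hpc⟩ := ρ.surjective ⟨k + 1, hk⟩
  have := p.isLt
  rw [pref_of_lt f hk]
  rcases parks_next_to_block hρ hpk rfl hpc (sublevel_eq_block hρ hpk (by omega)) with h | h
  · exact Or.inl h.1
  · rw [Fin.le_def] at h
    exact Or.inr ⟨h.1, by omega, by omega⟩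

end Forward

section Code

variable {m : ℕ}

-- `x c = none`: car `c + 1` parks left of the block; `x c = some j`: it parks right of the block,
-- with preference `j` spots past the block's left end.
abbrev Code (m : ℕ) := (c : Fin m) → Option (Fin (c + 2))

def leftCount (x : Code m) (k : ℕ) : ℕ := #(univ.filter fun c : Fin m => k ≤ c.val ∧ x c = none)

lemma leftCount_eq_succ_add (x : Code m) {k : ℕ} (hk : k < m) :
    leftCount x k = leftCount x (k + 1) + if x ⟨k, hk⟩ = none then 1 else 0 := by
  unfold leftCount
  split_ifs with hx
  · rw [← card_insert_of_notMem (a := ⟨k, hk⟩) (by simp)]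
    congr 1
    ext c
    simp only [mem_filter, mem_univ, true_and, mem_insert, Fin.ext_iff]
    constructor
    · rintro ⟨hkc, hc⟩
      rcases hkc.eq_or_lt with h | h
      · exact Or.inl h.symm
      · exact Or.inr ⟨h, hc⟩
    · rintro (h | ⟨h, hc⟩)
      · exact ⟨h.ge, (Fin.ext h : c = ⟨k, hk⟩) ▸ hx⟩
      · exact ⟨by omega, hc⟩
  · rw [add_zero]
    congr 1
    ext c
    simp only [mem_filter, mem_univ, true_and]
    refine ⟨fun ⟨hkc, hc⟩ => ⟨hkc.lt_of_ne fun h => hx ?_, hc⟩, fun ⟨h, hc⟩ => ⟨by omega, hc⟩⟩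
    exact (Fin.ext h.symm : c = ⟨k, hk⟩) ▸ hc

lemma leftCount_le (x : Code m) (k : ℕ) : leftCount x k ≤ m - k := by
  calc leftCount x k ≤ #(Ico k m) :=
        card_le_card_of_injOn Fin.val (fun c hc => by simp_all) Fin.val_injective.injOn
    _ = m - k := Nat.card_Ico k m

lemma leftCount_succ_of_none (x : Code m) {k : ℕ} (hk : k < m) (hx : x ⟨k, hk⟩ = none) :
    leftCount x k = leftCount x (k + 1) + 1 := by
  simpa [hx] using leftCount_eq_succ_add x hk

lemma leftCount_succ_of_some (x : Code m) {k : ℕ} (hk : k < m) {j : Fin (k + 2)}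
    (hx : x ⟨k, hk⟩ = some j) : leftCount x k = leftCount x (k + 1) := by
  simpa [hx] using leftCount_eq_succ_add x hk

def buildPref (x : Code m) : Fin (m + 1) → ℕ :=
  Fin.cons (leftCount x 0) fun c => (x c).elim (leftCount x c - 1) (leftCount x c + ·)

lemma buildPref_lt (x : Code m) (i : Fin (m + 1)) : buildPref x i < m + 1 := by
  induction i using Fin.cases with
  | zero =>
    have := leftCount_le x 0
    simp only [buildPref, Fin.cons_zero]
    omega
  | succ c =>
    have := leftCount_le x (c + 1)
    simp only [buildPref, Fin.cons_succ]
    cases hx : x c with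
    | none =>
      have := leftCount_succ_of_none x c.isLt hx
      simp only [Option.elim_none]
      omega
    | some j =>
      have := leftCount_succ_of_some x c.isLt hx
      have : j.val < c + 2 := j.isLt
      simp only [Option.elim_some]
      omega

def build (x : Code m) (i : Fin (m + 1)) : Fin (m + 1) := ⟨buildPref x i, buildPref_lt x i⟩

lemma pref_build_zero (x : Code m) : pref (build x) 0 = leftCount x 0 := by
  simp [pref, build, buildPref]

lemma pref_build_succ (x : Code m) {k : ℕ} (hk : k < m) :
    pref (build x) (k + 1) = (x ⟨k, hk⟩).elim (leftCount x k - 1) (leftCount x k + ·) := by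
  rw [pref_of_lt _ (by omega)]
  show buildPref x (Fin.succ ⟨k, hk⟩) = _
  simp only [buildPref, Fin.cons_succ]

lemma leftEnd_build (x : Code m) {k : ℕ} (hk : k ≤ m) : leftEnd (build x) k = leftCount x k := by
  induction k with
  | zero => exact pref_build_zero x
  | succ k ih =>
    have hk' : k < m := by omega
    have hpref := pref_build_succ x hk'
    cases hx : x ⟨k, hk'⟩ with
    | none =>
      have := leftCount_succ_of_none x hk' hx
      rw [hx, Option.elim_none] at hpref
      rw [leftEnd_succ_of_lt _ (by omega), ih hk'.le]
      omega
    | some j =>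
      have := leftCount_succ_of_some x hk' hx
      rw [hx, Option.elim_some] at hpref
      rw [leftEnd_succ_of_le _ (by omega), ih hk'.le, this]

theorem build_parksContiguously (x : Code m) : ParksContiguously (build x) := by
  intro k hk
  have hk' : k < m := by omega
  rw [leftEnd_build x hk'.le, pref_build_succ x hk']
  cases hx : x ⟨k, hk'⟩ with
  | none =>
    have := leftCount_succ_of_none x hk' hx
    left; simp only [Option.elim_none]; omega
  | some j =>
    have := leftCount_succ_of_some x hk' hx
    have := leftCount_le x (k + 1)
    have : j.val < k + 2 := j.isLt
    right; simp only [Option.elim_some]; omega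

def decode (f : Fin (m + 1) → Fin (m + 1)) (hQ : ParksContiguously f) : Code m := fun c =>
  if pref f (c + 1) + 1 = leftEnd f c then none
  else some ⟨pref f (c + 1) - leftEnd f c, by have := hQ c (by omega); omega⟩

lemma leftCount_decode {f : Fin (m + 1) → Fin (m + 1)} (hQ : ParksContiguously f) {k : ℕ}
    (hk : k ≤ m) : leftCount (decode f hQ) k = leftEnd f k := by
  induction hk using Nat.decreasingInduction with
  | self =>
    have := leftCount_le (decode f hQ) m
    have := hQ.leftEnd_add_lt (k := m) (by omega)
    omega
  | of_succ k hk ih =>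
    rw [leftCount_eq_succ_add _ hk, ih]
    rcases hQ k (by omega) with h | h
    · rw [leftEnd_succ_of_lt f (by omega)]
      simp only [decode, h, if_true]
      omega
    · rw [leftEnd_succ_of_le f h.1]
      simp only [decode, if_neg (show pref f (k + 1) + 1 ≠ leftEnd f k by omega)]
      rfl

theorem build_decode {f : Fin (m + 1) → Fin (m + 1)} (hQ : ParksContiguously f) :
    build (decode f hQ) = f := by
  funext ⟨k, hk⟩
  apply Fin.ext
  rw [← pref_of_lt f hk, ← pref_of_lt (build _) hk]
  cases k with
  | zero => rw [pref_build_zero, leftCount_decode hQ (Nat.zero_le m)]; rfl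
  | succ k =>
    have hk' : k < m := by omega
    rw [pref_build_succ _ hk', leftCount_decode hQ hk'.le]
    rcases hQ k hk with h | h
    · simp only [decode, h, if_true, Option.elim_none]
      omega
    · simp only [decode, if_neg (show pref f (k + 1) + 1 ≠ leftEnd f k by omega),
        Option.elim_some]
      omega

theorem decode_build (x : Code m) : decode (build x) (build_parksContiguously x) = x := by
  funext c
  have hpref : pref (build x) (c + 1) = (x c).elim (leftCount x c - 1) (leftCount x c + ·) :=
    pref_build_succ x c.isLt
  have hlo := leftEnd_build x c.isLt.le
  unfold decode
  cases hx : x c with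
  | none =>
    have := leftCount_succ_of_none x c.isLt hx
    rw [hx, Option.elim_none] at hpref
    rw [if_pos (by omega)]
  | some j =>
    rw [hx, Option.elim_some] at hpref
    rw [if_neg (by omega)]
    congr
    simp only [hpref, hlo]
    omega

end Code

def codeEquiv (m : ℕ) : {f : Fin (m + 1) → Fin (m + 1) // ParksContiguously f} ≃ Code m where
  toFun f := decode f.1 f.2
  invFun x := ⟨build x, build_parksContiguously x⟩
  left_inv f := Subtype.ext (build_decode f.2)
  right_inv := decode_build

lemma two_mul_card_code (m : ℕ) : 2 * Nat.card (Code m) = (m + 2).factorial := by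
  rw [Nat.card_pi]
  simp only [Nat.card_eq_fintype_card, Fintype.card_option, Fintype.card_fin]
  rw [Fin.prod_univ_eq_prod_range (· + 2 + 1), add_comm m, ← Nat.factorial_mul_ascFactorial,
    Nat.ascFactorial_eq_prod_range]
  simp only [Nat.factorial_two]
  congr 2 with i
  omega

theorem parksContiguously_iff {f : Fin n → Fin n} :
    (IsParkingFunction f ∧ ∃ ρ, IsParkingPerm f ρ ∧ AvoidsAll ρ [p132, p231]) ↔
      ParksContiguously f :=
  ⟨fun ⟨_, _, hρ, hav⟩ => parksContiguously hρ (avoidsAll_p132_p231_iff.1 hav),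
    fun hQ => ⟨IsParkingPerm.isParkingFunction hQ.isParkingPerm, _, hQ.isParkingPerm,
      avoidsAll_p132_p231_iff.2 hQ.hasNoPeak⟩⟩

end Parking

/-- The number of parking functions of size `n` whose parking permutation avoids
both 132 and 231 equals `(n+1)!/2`. -/
theorem stmt15 (n : ℕ) (hn : 1 ≤ n) :
    2 * pk n [p132, p231] = (n + 1).factorial := by
  obtain ⟨m, rfl⟩ := Nat.exists_eq_add_of_le' hn
  rw [pk, Nat.card_congr ((Equiv.subtypeEquivRight fun _ => Parking.parksContiguously_iff).trans
    (Parking.codeEquiv m)), Parking.two_mul_card_code]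
end
end

section
/- The number of parking functions of size n whose parking permutation avoids both 123 and 132 equals (1/√5)·((3+√5)/2)^n − (1/√5)·((3−√5)/2)^n; equivalently, it equals the Fibonacci number F_{2n}. -/
open Finset

noncomputable section

/-!
Avoiding 123 and 132 means that every entry of the parking permutation `ρ` has at most one larger
entry to its right, i.e. `n ≤ ρ i + i + 2` (0-indexed). The car parked at spot `s` passed only spots
taken by earlier cars, so this is equivalent to every car `c` preferring a spot `≥ n - 2 - c`.
Writing that preference as `n - 2 - c + ℓ c`, the parking condition says exactly that the blocks of
`ℓ c` cells ending at the cells `c` are pairwise disjoint, and the block of the last car is never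
empty. Peeling off the block at the last cell shows that sets of disjoint blocks on `m` cells are
counted by `F (2m+1)`, and those with a block ending at the last cell by `F (2m+2)`.
-/

section Parking

variable {n : ℕ} {f : Fin n → Fin n}

structure ParkingInvariant (f : Fin n → Fin n) (k : ℕ) (occ : Fin n → Option (Fin n)) : Prop where
  lt_of_eq_some : ∀ {s c}, occ s = some c → c.val < k
  le_of_eq_some : ∀ {s c}, occ s = some c → f c ≤ s
  eq_of_eq_some : ∀ {s s' c}, occ s = some c → occ s' = some c → s = s'
  exists_eq_some : ∀ c : Fin n, c.val < k → ∃ s, occ s = some c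
  exists_lt_of_lt : ∀ {s c u}, occ s = some c → f c ≤ u → u < s → ∃ d, occ u = some d ∧ d < c

namespace ParkingInvariant

variable {k : ℕ} {occ : Fin n → Option (Fin n)}

theorem zero : ParkingInvariant f 0 fun _ => none :=
  ⟨nofun, nofun, nofun, fun _ h => absurd h (Nat.not_lt_zero _), nofun⟩

theorem succ_of_le (hI : ParkingInvariant f k occ) (hk : n ≤ k) :
    ParkingInvariant f (k + 1) occ :=
  ⟨fun h => Nat.lt_succ_of_lt (hI.lt_of_eq_some h), hI.le_of_eq_some, hI.eq_of_eq_some,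
    fun c _ => hI.exists_eq_some c (by omega), hI.exists_lt_of_lt⟩

theorem park (hI : ParkingInvariant f k occ) (hk : k < n) {s₀ : Fin n} (hs₀ : f ⟨k, hk⟩ ≤ s₀)
    (hfree : occ s₀ = none) (hfirst : ∀ u, f ⟨k, hk⟩ ≤ u → u < s₀ → occ u ≠ none) :
    ParkingInvariant f (k + 1) (Function.update occ s₀ (some ⟨k, hk⟩)) := by
  have hne : ∀ {u d}, occ u = some d → u ≠ s₀ := fun h hu => by simp [hu, hfree] at h
  refine ⟨fun {s c} h => ?_, fun {s c} h => ?_, fun {s s' c} h h' => ?_, fun c hc => ?_,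
    fun {s c u} h hu hus => ?_⟩
  · rw [Function.update_apply] at h
    split_ifs at h
    · cases h; exact Nat.lt_succ_self k
    · exact Nat.lt_succ_of_lt (hI.lt_of_eq_some h)
  · rw [Function.update_apply] at h
    split_ifs at h with hs
    · cases h; exact hs ▸ hs₀
    · exact hI.le_of_eq_some h
  · rw [Function.update_apply] at h h'
    split_ifs at h h' with hs hs'
    · exact hs.trans hs'.symm
    · cases h; exact absurd (hI.lt_of_eq_some h') (lt_irrefl k)
    · cases h'; exact absurd (hI.lt_of_eq_some h) (lt_irrefl k)
    · exact hI.eq_of_eq_some h h'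
  · rcases (Nat.lt_succ_iff.1 hc).lt_or_eq with hc | hc
    · obtain ⟨s, hs⟩ := hI.exists_eq_some c hc
      exact ⟨s, by rw [Function.update_of_ne (hne hs), hs]⟩
    · exact ⟨s₀, by rw [Function.update_self]; exact congrArg some (Fin.ext hc.symm)⟩
  · rw [Function.update_apply] at h
    split_ifs at h with hs
    · cases h
      obtain ⟨d, hd⟩ := Option.ne_none_iff_exists'.1 (hfirst u hu (hs ▸ hus))
      exact ⟨d, by rw [Function.update_of_ne (hne hd), hd], hI.lt_of_eq_some hd⟩
    · obtain ⟨d, hd, hdc⟩ := hI.exists_lt_of_lt h hu hus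
      exact ⟨d, by rw [Function.update_of_ne (hne hd), hd], hdc⟩

end ParkingInvariant

theorem parkingInvariant_of_parkAux :
    ∀ {k occ}, parkAux f k = some occ → ParkingInvariant f k occ
  | 0, occ, h => by
    obtain rfl : (fun _ => none) = occ := Option.some.inj h
    exact .zero
  | k + 1, occ', h => by
    obtain ⟨occ, hocc, h⟩ := Option.bind_eq_some_iff.1 h
    have hI := parkingInvariant_of_parkAux hocc
    split_ifs at h with hk hS
    · cases h
      have hmin := mem_filter.1 (min'_mem _ hS)
      exact hI.park hk hmin.2.1 hmin.2.2 fun u hu hus hfree =>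
        (min'_le _ u (mem_filter.2 ⟨mem_univ u, hu, hfree⟩)).not_gt hus
    · cases h
      exact hI.succ_of_le (not_lt.1 hk)

namespace ParkingInvariant

variable {k : ℕ} {occ : Fin n → Option (Fin n)}

theorem exists_eq_none (hI : ParkingInvariant f k occ) (hk : k < n) : ∃ s, occ s = none := by
  by_contra! hall
  choose car hcar using fun s => Option.ne_none_iff_exists'.1 (hall s)
  have hinj : Function.Injective car := fun s t hst =>
    hI.eq_of_eq_some (hcar s) (hst ▸ hcar t)
  obtain ⟨s, hs⟩ := Finite.injective_iff_surjective.1 hinj ⟨k, hk⟩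
  have := hI.lt_of_eq_some (hcar s)
  rw [hs] at this
  exact lt_irrefl k this

-- If all spots `≥ f k` were taken, car `k` and the occupants of the spots after the last free spot
-- `s₀` would be `n - s₀` cars preferring spots after `s₀`, against the parking condition at `s₀`.
theorem exists_free_ge (hPF : IsParkingFunction f) (hI : ParkingInvariant f k occ) (hk : k < n) :
    ∃ s, f ⟨k, hk⟩ ≤ s ∧ occ s = none := by
  by_contra! hS
  obtain ⟨s₀, hs₀, hmax⟩ : ∃ s₀, occ s₀ = none ∧ ∀ t, occ t = none → t ≤ s₀ := by
    obtain ⟨s, hs⟩ := hI.exists_eq_none hk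
    have hne : ({t | occ t = none} : Finset (Fin n)).Nonempty := ⟨s, by simpa using hs⟩
    exact ⟨_, (mem_filter.1 (max'_mem _ hne)).2,
      fun t ht => le_max' _ t (mem_filter.2 ⟨mem_univ t, ht⟩)⟩
  set g : Fin n → Fin n := fun t => (occ t).getD ⟨k, hk⟩
  have hg : ∀ t, s₀ ≤ t → (t = s₀ ∧ g t = ⟨k, hk⟩) ∨ (s₀ < t ∧ occ t = some (g t)) := by
    intro t ht
    cases h : occ t with
    | none => exact .inl ⟨le_antisymm (hmax t h) ht, by simp [g, h]⟩
    | some c =>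
      exact .inr ⟨ht.lt_of_ne (by rintro rfl; simp [hs₀] at h), by simp [g, h]⟩
  have hmaps : ∀ t ∈ Ici s₀, g t ∈ ({c | s₀ < f c} : Finset (Fin n)) := by
    intro t ht
    simp only [mem_Ici, mem_filter, mem_univ, true_and] at ht ⊢
    rcases hg t ht with ⟨-, hgt⟩ | ⟨hst, hgt⟩
    · rw [hgt]
      exact lt_of_not_ge fun h => hS s₀ h hs₀
    · refine lt_of_not_ge fun h => ?_
      obtain ⟨d, hd, -⟩ := hI.exists_lt_of_lt hgt h hst
      simp [hs₀] at hd
  have hinj : Set.InjOn g (Ici s₀) := by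
    intro t ht t' ht' htt'
    simp only [coe_Ici, Set.mem_Ici] at ht ht'
    rcases hg t ht with ⟨rfl, h⟩ | ⟨-, h⟩ <;> rcases hg t' ht' with ⟨rfl, h'⟩ | ⟨-, h'⟩
    · rfl
    · exact absurd (hI.lt_of_eq_some h') (by rw [← htt', h]; exact lt_irrefl k)
    · exact absurd (hI.lt_of_eq_some h) (by rw [htt', h']; exact lt_irrefl k)
    · exact hI.eq_of_eq_some h (htt' ▸ h')
  have hcount := card_le_card_of_injOn g hmaps hinj
  have hsplit := card_filter_add_card_filter_not (s := univ) (fun c => f c ≤ s₀)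
  simp only [not_le, card_univ, Fintype.card_fin] at hsplit
  have := hPF s₀
  rw [Fin.card_Ici] at hcount
  omega

end ParkingInvariant

theorem exists_parkAux_eq_some (hPF : IsParkingFunction f) :
    ∀ k ≤ n, ∃ occ, parkAux f k = some occ
  | 0, _ => ⟨_, rfl⟩
  | k + 1, hk => by
    replace hk : k < n := hk
    obtain ⟨occ, hocc⟩ := exists_parkAux_eq_some hPF k (by omega)
    obtain ⟨s, hs, hfree⟩ := (parkingInvariant_of_parkAux hocc).exists_free_ge hPF hk
    have hS : ({s | f ⟨k, hk⟩ ≤ s ∧ occ s = none} : Finset (Fin n)).Nonempty :=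
      ⟨s, by simp [hs, hfree]⟩
    exact ⟨_, by rw [parkAux, hocc, Option.bind_some, dif_pos hk, dif_pos hS]⟩

theorem exists_isParkingPerm (hPF : IsParkingFunction f) : ∃ ρ, IsParkingPerm f ρ := by
  obtain ⟨occ, hocc⟩ := exists_parkAux_eq_some hPF n le_rfl
  have hI := parkingInvariant_of_parkAux hocc
  choose spot hspot using fun c : Fin n => hI.exists_eq_some c c.2
  have hinj : Function.Injective spot := fun c d h =>
    Option.some.inj ((hspot c).symm.trans (h ▸ hspot d))
  let e := Equiv.ofBijective spot (Finite.injective_iff_bijective.1 hinj)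
  refine ⟨e.symm, hocc.trans (congrArg some (funext fun s => ?_))⟩
  rw [← hspot (e.symm s)]
  exact congrArg occ (e.apply_symm_apply s).symm

namespace IsParkingPerm

variable {ρ : Equiv.Perm (Fin n)}

theorem pref_le (hρ : IsParkingPerm f ρ) (s : Fin n) : f (ρ s) ≤ s :=
  (parkingInvariant_of_parkAux hρ).le_of_eq_some rfl

theorem lt_of_pref_le_of_lt {s u : Fin n} (hρ : IsParkingPerm f ρ) (hu : f (ρ s) ≤ u)
    (hus : u < s) : ρ u < ρ s := by
  obtain ⟨d, hd, hds⟩ := (parkingInvariant_of_parkAux hρ).exists_lt_of_lt rfl hu hus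
  exact (Option.some.inj hd).symm ▸ hds

theorem forall_le_iff (hρ : IsParkingPerm f ρ) :
    (∀ i, n ≤ ρ i + i + 2) ↔ ∀ c, n ≤ f c + c + 2 := by
  constructor
  · intro h c
    obtain ⟨s, rfl⟩ := ρ.surjective c
    rcases (hρ.pref_le s).lt_or_eq with hlt | heq
    · have hlt' := hρ.lt_of_pref_le_of_lt le_rfl hlt
      have := h (f (ρ s))
      rw [Fin.lt_def] at hlt'
      omega
    · have := h s
      rw [heq]
      omega
  · intro h i
    have := h (ρ i)
    have := hρ.pref_le i
    rw [Fin.le_def] at this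
    omega

end IsParkingPerm

end Parking

section Patterns

variable {n : ℕ}

theorem containsPattern_of_strictMono {m : ℕ} {π : Equiv.Perm (Fin n)} {σ : Equiv.Perm (Fin m)}
    {g e : Fin m → Fin n} (hg : StrictMono g) (he : StrictMono e) (h : ∀ a, π (g a) = e (σ a)) :
    ContainsPattern π σ :=
  ⟨g, hg, fun a b => by rw [h, h, he.lt_iff_lt]⟩

theorem strictMono_vec₃ {α : Type*} [Preorder α] {a b c : α} (hab : a < b) (hbc : b < c) :
    StrictMono ![a, b, c] :=
  Fin.strictMono_iff_lt_succ.2 fun i => by fin_cases i <;> simpa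

theorem containsPattern_123_or_132_iff (ρ : Equiv.Perm (Fin n)) :
    ContainsPattern ρ p123 ∨ ContainsPattern ρ p132 ↔
      ∃ i j k, i < j ∧ j < k ∧ ρ i < ρ j ∧ ρ i < ρ k := by
  constructor
  · rintro (⟨g, hg, hpat⟩ | ⟨g, hg, hpat⟩) <;>
      exact ⟨g 0, g 1, g 2, hg (by decide), hg (by decide), (hpat 0 1).1 (by decide),
        (hpat 0 2).1 (by decide)⟩
  · rintro ⟨i, j, k, hij, hjk, hj, hk⟩
    rcases lt_or_gt_of_ne (ρ.injective.ne hjk.ne) with hjk' | hkj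
    · exact .inl (containsPattern_of_strictMono (strictMono_vec₃ hij hjk)
        (strictMono_vec₃ hj hjk') fun a => by fin_cases a <;> rfl)
    · exact .inr (containsPattern_of_strictMono (strictMono_vec₃ hij hjk)
        (strictMono_vec₃ hk hkj) fun a => by fin_cases a <;> rfl)

theorem exists_two_larger_after_iff (ρ : Equiv.Perm (Fin n)) :
    (∃ i j k, i < j ∧ j < k ∧ ρ i < ρ j ∧ ρ i < ρ k) ↔ ∃ i : Fin n, ρ i + i + 2 < n := by
  constructor
  · rintro ⟨i, j, k, hij, hjk, hj, hk⟩
    by_contra! hbound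
    -- `ρ j`, `ρ k` and the `ρ p` with `p ≤ i` are `i + 3` values in `[n - 2 - i, n)`.
    set W := insert (ρ j) (insert (ρ k) ((Iic i).image ρ))
    have hk_notMem : ρ k ∉ (Iic i).image ρ := by
      simp only [mem_image, mem_Iic, ρ.injective.eq_iff]
      rintro ⟨p, hp, rfl⟩
      exact (hp.trans_lt (hij.trans hjk)).false
    have hj_notMem : ρ j ∉ insert (ρ k) ((Iic i).image ρ) := by
      simp only [mem_insert, mem_image, mem_Iic, ρ.injective.eq_iff]
      rintro (h | ⟨p, hp, rfl⟩)
      exacts [hjk.ne h, (hp.trans_lt hij).false]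
    have hW : #W = i + 3 := by
      rw [card_insert_of_notMem hj_notMem, card_insert_of_notMem hk_notMem,
        card_image_of_injective _ ρ.injective, Fin.card_Iic]
    have hsub : W.image Fin.val ⊆ Ico (n - (i + 2)) n := by
      intro v hv
      simp only [W, mem_image, mem_insert, mem_Iic, mem_Ico] at hv ⊢
      obtain ⟨w, hw, rfl⟩ := hv
      refine ⟨?_, w.2⟩
      have := hbound i
      rcases hw with rfl | rfl | ⟨p, hp, rfl⟩
      · rw [Fin.lt_def] at hj; omega
      · rw [Fin.lt_def] at hk; omega
      · have := hbound p; rw [Fin.le_def] at hp; omega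
    have := card_le_card hsub
    rw [card_image_of_injective _ Fin.val_injective, hW, Nat.card_Ico] at this
    omega
  · rintro ⟨i, hi⟩
    have hlarger : #{j | ρ i < ρ j} = n - 1 - ρ i := by
      rw [← Fin.card_Ioi, ← card_map ρ.toEmbedding]
      congr 1
      ext j
      simp
    have hsub : ({j | ρ i < ρ j} : Finset (Fin n)) ⊆
        ({j | i < j ∧ ρ i < ρ j} : Finset (Fin n)) ∪ Iio i := by
      intro j hj
      simp only [mem_filter, mem_univ, true_and, mem_union, mem_Iio] at hj ⊢
      rcases lt_trichotomy i j with h | rfl | h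
      exacts [.inl ⟨h, hj⟩, (lt_irrefl _ hj).elim, .inr h]
    have := (card_le_card hsub).trans (card_union_le _ _)
    rw [hlarger, Fin.card_Iio] at this
    obtain ⟨a, ha, b, hb, hab⟩ := one_lt_card.1 (show 1 < #{j | i < j ∧ ρ i < ρ j} by omega)
    simp only [mem_filter, mem_univ, true_and] at ha hb
    rcases lt_or_gt_of_ne hab with h | h
    exacts [⟨i, a, b, ha.1, h, ha.2, hb.2⟩, ⟨i, b, a, hb.1, h, hb.2, ha.2⟩]

theorem avoidsAll_123_132_iff (ρ : Equiv.Perm (Fin n)) :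
    AvoidsAll ρ [p123, p132] ↔ ∀ i : Fin n, n ≤ ρ i + i + 2 := by
  have := (containsPattern_123_or_132_iff ρ).trans (exists_two_larger_after_iff ρ)
  simp only [AvoidsAll, List.mem_cons, List.not_mem_nil, or_false, forall_eq_or_imp, forall_eq]
  rw [← not_or, this]
  simp only [not_exists, not_lt]

end Patterns

theorem isParkingFunction_and_avoids_iff {n : ℕ} {f : Fin n → Fin n} :
    (IsParkingFunction f ∧ ∃ ρ, IsParkingPerm f ρ ∧ AvoidsAll ρ [p123, p132]) ↔
      IsParkingFunction f ∧ ∀ c, n ≤ f c + c + 2 := by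
  refine and_congr_right fun hPF => ⟨?_, fun hb => ?_⟩
  · rintro ⟨ρ, hρ, hav⟩
    exact hρ.forall_le_iff.1 ((avoidsAll_123_132_iff ρ).1 hav)
  · obtain ⟨ρ, hρ⟩ := exists_isParkingPerm hPF
    exact ⟨ρ, hρ, (avoidsAll_123_132_iff ρ).2 (hρ.forall_le_iff.2 hb)⟩

-- `L c` is the length of the block of cells ending at cell `c` (`0`: no block ends there).
structure IsBlocks (m : ℕ) (L : ℕ → ℕ) : Prop where
  le_succ : ∀ c, L c ≤ c + 1
  disjoint : ∀ c' c, c' < c → c < c' + L c → L c' = 0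
  eq_zero_of_le : ∀ c, m ≤ c → L c = 0

namespace IsBlocks

variable {m : ℕ} {L : ℕ → ℕ}

instance finite (m : ℕ) : Finite {L // IsBlocks m L} := by
  refine Finite.of_injective (fun L : {L // IsBlocks m L} => fun i : Fin m =>
    (⟨L.1 i, Nat.lt_succ_of_le ((L.2.le_succ i).trans i.2)⟩ : Fin (m + 1))) ?_
  rintro ⟨L, hL⟩ ⟨L', hL'⟩ h
  ext c
  by_cases hc : c < m
  · simpa using congrFun h ⟨c, hc⟩
  · exact (hL.eq_zero_of_le c (by omega)).trans (hL'.eq_zero_of_le c (by omega)).symm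

theorem succ_and_eq_zero_iff : IsBlocks (m + 1) L ∧ L m = 0 ↔ IsBlocks m L := by
  constructor
  · rintro ⟨hL, h0⟩
    refine ⟨hL.le_succ, hL.disjoint, fun c hc => ?_⟩
    rcases hc.eq_or_lt with rfl | hc
    exacts [h0, hL.eq_zero_of_le c hc]
  · intro hL
    exact ⟨⟨hL.le_succ, hL.disjoint, fun c hc => hL.eq_zero_of_le c (by omega)⟩,
      hL.eq_zero_of_le m le_rfl⟩

theorem update_zero {b : ℕ} (hL : IsBlocks (m + 1) L) (hb : L m = b + 1) :
    IsBlocks (m - b) (Function.update L m 0) := by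
  refine ⟨fun c => ?_, fun c' c hc hlt => ?_, fun c hc => ?_⟩ <;>
    simp only [Function.update_apply] at *
  · split_ifs
    exacts [by omega, hL.le_succ c]
  · by_cases hc' : c' = m
    · rw [if_pos hc']
    · rw [if_neg hc']
      by_cases hcm : c = m
      · rw [if_pos hcm] at hlt; omega
      · rw [if_neg hcm] at hlt
        exact hL.disjoint c' c hc hlt
  · split_ifs with h
    · rfl
    · rcases Nat.lt_or_gt_of_ne h with h | h
      exacts [hL.disjoint c m h (by omega), hL.eq_zero_of_le c h]

theorem update_succ {b : ℕ} (hb : b ≤ m) (hL : IsBlocks (m - b) L) :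
    IsBlocks (m + 1) (Function.update L m (b + 1)) := by
  refine ⟨fun c => ?_, fun c' c hc hlt => ?_, fun c hc => ?_⟩ <;>
    simp only [Function.update_apply] at *
  · split_ifs with h
    exacts [by omega, hL.le_succ c]
  · by_cases hcm : c = m
    · rw [if_pos hcm] at hlt
      rw [if_neg (by omega)]
      exact hL.eq_zero_of_le c' (by omega)
    · rw [if_neg hcm] at hlt
      have hcb : c < m - b := by
        by_contra h
        rw [hL.eq_zero_of_le c (by omega)] at hlt
        omega
      rw [if_neg (by omega)]
      exact hL.disjoint c' c hc hlt
  · rw [if_neg (by omega)]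
    exact hL.eq_zero_of_le c (by omega)

end IsBlocks

def lastBlockEquiv (m : ℕ) :
    {L // IsBlocks (m + 1) L ∧ L m ≠ 0} ≃ Σ b : Fin (m + 1), {L // IsBlocks (m - b) L} where
  toFun L := ⟨⟨L.1 m - 1, by have := L.2.1.le_succ m; omega⟩, Function.update L.1 m 0,
    L.2.1.update_zero (Nat.sub_add_cancel (Nat.one_le_iff_ne_zero.2 L.2.2)).symm⟩
  invFun p :=
    ⟨Function.update p.2.1 m (p.1 + 1), p.2.2.update_succ (Nat.lt_succ_iff.1 p.1.2), by simp⟩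
  left_inv L := by
    obtain ⟨L, hL, hm⟩ := L
    apply Subtype.ext
    simp only [Function.update_idem]
    rw [Nat.sub_add_cancel (Nat.one_le_iff_ne_zero.2 hm), Function.update_eq_self]
  right_inv p := by
    obtain ⟨b, L, hL⟩ := p
    refine Sigma.subtype_ext (Fin.ext (by simp)) ?_
    simp [← hL.eq_zero_of_le m (Nat.sub_le m b)]

namespace IsBlocks

theorem card_zero : Nat.card {L // IsBlocks 0 L} = 1 :=
  Nat.card_eq_one_iff_exists.2 ⟨⟨0, fun _ => by simp, fun _ _ _ _ => rfl, fun _ _ => rfl⟩,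
    fun L => Subtype.ext (funext fun c => L.2.eq_zero_of_le c c.zero_le)⟩

theorem card_succ (m : ℕ) : Nat.card {L // IsBlocks (m + 1) L} =
    Nat.card {L // IsBlocks m L} + Nat.card {L // IsBlocks (m + 1) L ∧ L m ≠ 0} := by
  rw [← Nat.card_congr (Equiv.sumCompl fun L : {L // IsBlocks (m + 1) L} => L.1 m = 0),
    Nat.card_sum,
    Nat.card_congr (Equiv.subtypeSubtypeEquivSubtypeInter (IsBlocks (m + 1)) fun L => L m = 0),
    Nat.card_congr (Equiv.subtypeSubtypeEquivSubtypeInter (IsBlocks (m + 1)) fun L => L m ≠ 0),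
    Nat.card_congr (Equiv.subtypeEquivRight fun _ => succ_and_eq_zero_iff)]

theorem card_last_ne_zero (m : ℕ) : Nat.card {L // IsBlocks (m + 1) L ∧ L m ≠ 0} =
    ∑ b ∈ range (m + 1), Nat.card {L // IsBlocks (m - b) L} := by
  rw [Nat.card_congr (lastBlockEquiv m), Nat.card_sigma,
    Fin.sum_univ_eq_sum_range fun b => Nat.card {L // IsBlocks (m - b) L}]

theorem card_eq_fib (m : ℕ) : Nat.card {L // IsBlocks m L} = Nat.fib (2 * m + 1) ∧
    Nat.card {L // IsBlocks (m + 1) L ∧ L m ≠ 0} = Nat.fib (2 * m + 2) := by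
  induction m with
  | zero => simp [card_last_ne_zero, card_zero]
  | succ m ih =>
    have hC : Nat.card {L // IsBlocks (m + 1) L} = Nat.fib (2 * (m + 1) + 1) := by
      rw [card_succ, ih.1, ih.2]
      exact Nat.fib_add_two.symm
    refine ⟨hC, ?_⟩
    rw [card_last_ne_zero, Finset.sum_range_succ']
    simp only [Nat.add_sub_add_right, Nat.sub_zero]
    rw [← card_last_ne_zero, ih.2, hC]
    exact Nat.fib_add_two.symm

end IsBlocks

section Encoding

variable {n : ℕ} {f : Fin n → Fin n}

-- How far the preference of car `c` lies beyond spot `n - 2 - c` (truncated at `0`).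
def toBlocks (f : Fin n → Fin n) (c : ℕ) : ℕ :=
  if h : c < n then f ⟨c, h⟩ + c + 2 - n else 0

theorem toBlocks_val (c : Fin n) : toBlocks f c = f c + c + 2 - n := by
  simp [toBlocks]

theorem toBlocks_of_le {c : ℕ} (hc : n ≤ c) : toBlocks f c = 0 := by
  simp [toBlocks, not_lt.2 hc]

theorem toBlocks_le_succ (c : ℕ) : toBlocks f c ≤ c + 1 := by
  unfold toBlocks
  split_ifs with h
  · have := (f ⟨c, h⟩).2; omega
  · omega

theorem card_lt_apply_eq (hb : ∀ c, n ≤ f c + c + 2) (i : Fin n) :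
    #{c | i < f c} = (n - (i + 2)) + #{c : Fin n | n ≤ c + i + 2 ∧ i < f c} := by
  rw [← card_filter_add_card_filter_not (s := {c | i < f c}) fun c : Fin n => c.val < n - (i + 2),
    filter_filter, filter_filter]
  congr 1
  · trans #{c : Fin n | c.val < n - (i + 2)}
    · congr 1
      ext c
      simp only [mem_filter, mem_univ, true_and, Fin.lt_def]
      have := hb c
      omega
    · rw [Fin.card_filter_val_lt, min_eq_right (Nat.sub_le _ _)]
  · congr 1
    ext c
    simp only [mem_filter, mem_univ, true_and]
    omega

theorem isParkingFunction_iff_card_le_one (hb : ∀ c, n ≤ f c + c + 2) :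
    IsParkingFunction f ↔ ∀ i : Fin n, #{c : Fin n | n ≤ c + i + 2 ∧ i < f c} ≤ 1 := by
  refine forall_congr' fun i => ?_
  have hsplit := card_filter_add_card_filter_not (s := univ) (fun c => f c ≤ i)
  simp only [not_le, card_univ, Fintype.card_fin] at hsplit
  have hlast : i.val + 1 = n → #{c | i < f c} = 0 := fun h => by
    rw [card_eq_zero, filter_eq_empty_iff]
    intro c _
    have := (f c).2
    rw [not_lt, Fin.le_def]; omega
  have hsub : #{c : Fin n | n ≤ c + i + 2 ∧ i < f c} ≤ #{c | i < f c} :=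
    card_le_card fun c hc => by simp only [mem_filter] at hc ⊢; exact ⟨hc.1, hc.2.2⟩
  have := card_lt_apply_eq hb i
  have := i.2
  omega

theorem forall_card_le_one_iff_disjoint :
    (∀ i : Fin n, #{c : Fin n | n ≤ c + i + 2 ∧ i < f c} ≤ 1) ↔
      ∀ c' c, c' < c → c < c' + toBlocks f c → toBlocks f c' = 0 := by
  constructor
  · intro h c' c hcc' hlt
    have hc : c < n := by
      by_contra hc
      rw [toBlocks_of_le (not_lt.1 hc)] at hlt
      omega
    have hc' : c' < n := by omega
    have hLc := toBlocks_val (f := f) ⟨c, hc⟩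
    have hLc' := toBlocks_val (f := f) ⟨c', hc'⟩
    simp only at hLc hLc'
    by_contra hne
    have := card_le_one.1 (h ⟨n - 2 - c', by omega⟩) ⟨c, hc⟩ (by simp [Fin.lt_def]; omega)
      ⟨c', hc'⟩ (by simp [Fin.lt_def]; omega)
    simp only [Fin.mk.injEq] at this
    omega
  · intro h i
    refine card_le_one.2 fun a ha b hb => ?_
    simp only [mem_filter, mem_univ, true_and, Fin.lt_def] at ha hb
    have key : ∀ a b : Fin n, a < b → n ≤ a + i + 2 → i < f a → i < f b → False := by
      intro a b hab hai hfa hfb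
      have := h a b hab (by rw [toBlocks_val]; simp only [Fin.lt_def] at *; omega)
      rw [toBlocks_val] at this
      simp only [Fin.lt_def] at *
      omega
    rcases lt_trichotomy a b with hab | rfl | hab
    exacts [(key a b hab ha.1 ha.2 hb.2).elim, rfl, (key b a hab hb.1 hb.2 ha.2).elim]

theorem isParkingFunction_iff_disjoint (hb : ∀ c, n ≤ f c + c + 2) :
    IsParkingFunction f ↔ ∀ c' c, c' < c → c < c' + toBlocks f c → toBlocks f c' = 0 :=
  (isParkingFunction_iff_card_le_one hb).trans forall_card_le_one_iff_disjoint

def ofBlocks (L : ℕ → ℕ) (hL : ∀ c, L c ≤ c + 1) (c : Fin n) : Fin n :=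
  ⟨L c + n - 2 - c, by have := hL c; have := c.2; omega⟩

theorem ofBlocks_toBlocks (hb : ∀ c, n ≤ f c + c + 2) :
    ofBlocks (toBlocks f) toBlocks_le_succ = f := by
  funext c
  ext
  simp only [ofBlocks, toBlocks_val]
  have := hb c
  omega

theorem toBlocks_ofBlocks {L : ℕ → ℕ} (hL : IsBlocks n L) (hL₀ : L (n - 1) ≠ 0) :
    toBlocks (ofBlocks (n := n) L hL.le_succ) = L := by
  funext c
  by_cases hc : c < n
  · have := toBlocks_val (f := ofBlocks (n := n) L hL.le_succ) ⟨c, hc⟩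
    simp only [ofBlocks] at this
    rw [this]
    rcases (Nat.le_sub_one_of_lt hc).lt_or_eq with h | rfl <;> omega
  · rw [toBlocks_of_le (not_lt.1 hc), hL.eq_zero_of_le c (not_lt.1 hc)]

def blocksEquiv (hn : 1 ≤ n) :
    {f : Fin n → Fin n // IsParkingFunction f ∧ ∀ c, n ≤ f c + c + 2} ≃
      {L // IsBlocks n L ∧ L (n - 1) ≠ 0} where
  toFun g := ⟨toBlocks g.1,
    ⟨toBlocks_le_succ, (isParkingFunction_iff_disjoint g.2.2).1 g.2.1, fun _ => toBlocks_of_le⟩,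
    by have := toBlocks_val (f := g.1) ⟨n - 1, by omega⟩; simp only at this; omega⟩
  invFun L := ⟨ofBlocks L.1 L.2.1.le_succ,
    by
      have hb : ∀ c : Fin n, n ≤ ofBlocks L.1 L.2.1.le_succ c + c + 2 := by
        intro c
        simp only [ofBlocks]
        omega
      refine ⟨(isParkingFunction_iff_disjoint hb).2 ?_, hb⟩
      rw [toBlocks_ofBlocks L.2.1 L.2.2]
      exact L.2.1.disjoint⟩
  left_inv g := Subtype.ext (ofBlocks_toBlocks g.2.2)
  right_inv L := Subtype.ext (toBlocks_ofBlocks L.2.1 L.2.2)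

end Encoding

theorem coe_fib_two_mul (n : ℕ) :
    (Nat.fib (2 * n) : ℝ) =
      1 / √5 * ((3 + √5) / 2) ^ n - 1 / √5 * ((3 - √5) / 2) ^ n := by
  have hφ : (3 + √5) / 2 = Real.goldenRatio ^ 2 := by
    rw [Real.goldenRatio_sq, Real.goldenRatio]; ring
  have hψ : (3 - √5) / 2 = Real.goldenConj ^ 2 := by
    rw [Real.goldenConj_sq, Real.goldenConj]; ring
  rw [Real.coe_fib_eq, hφ, hψ, ← pow_mul, ← pow_mul]
  ring

theorem stmt16 (n : ℕ) (hn : 1 ≤ n) :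
    ((pk n [p123, p132] : ℝ) =
      1 / Real.sqrt 5 * ((3 + Real.sqrt 5) / 2) ^ n
        - 1 / Real.sqrt 5 * ((3 - Real.sqrt 5) / 2) ^ n) ∧
    pk n [p123, p132] = Nat.fib (2 * n) := by
  have hpk : pk n [p123, p132] = Nat.fib (2 * n) := by
    obtain ⟨m, rfl⟩ : ∃ m, n = m + 1 := ⟨n - 1, by omega⟩
    rw [pk, Nat.card_congr ((Equiv.subtypeEquivRight fun _ =>
      isParkingFunction_and_avoids_iff).trans (blocksEquiv hn)), Nat.add_sub_cancel,
      (IsBlocks.card_eq_fib m).2]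
    rfl
  exact ⟨by rw [hpk, coe_fib_two_mul], hpk⟩
end
end
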